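/- arXiv:0912.4350 — 6 statements merged into one kernel-verified Lean document; each statement's English description precedes it below -/
import Mathlib

section
/- For 0 < q < 1 and any complex number a, the power series E_q(z) = Σ_{k≥0} q^{k(k-1)/2}/(q;q)_k · z^k converges at z = a and equals the infinite product (-a;q)_∞ = Π_{k≥0}(1 + q^k a). -/
/-!
Rothe's finite `q`-binomial theorem expands `∏_{j<n} (1 + q^j a)` as `∑_k q^{k(k-1)/2} [n k]_q a^k`.
As `n → ∞` each coefficient `q^{k(k-1)/2} [n k]_q` tends to `q^{k(k-1)/2}/(q;q)_k`, and for `‖q‖ < 1`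
the coefficients are dominated uniformly in `n` by `‖q^{k(k-1)/2}/(q;q)_k‖ 2^k`, whose series against
`‖a‖^k` converges by the ratio test. Tannery's theorem then identifies the limit of the partial
products with the series.
-/

open Filter Finset Topology

section Algebra

variable {R K : Type*} [CommRing R] [Field K]

/-- `(q;q)_k`. -/
def qPochhammer (q : R) (k : ℕ) : R := ∏ j ∈ range k, (1 - q ^ (j + 1))

/-- For `k ≤ n` this is `(q^(n-k+1);q)_k`; the truncated subtraction makes it vanish for `n < k`. -/
def qFalling (q : R) (n k : ℕ) : R := ∏ j ∈ range k, (1 - q ^ (n - j))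

def eulerCoeff (q : K) (k : ℕ) : K := q ^ (k * (k - 1) / 2) / qPochhammer q k

/-- `q^{k(k-1)/2}` times the Gaussian binomial coefficient `[n k]_q`. -/
def rotheCoeff (q : K) (n k : ℕ) : K := eulerCoeff q k * qFalling q n k

theorem qPochhammer_succ (q : R) (k : ℕ) :
    qPochhammer q (k + 1) = qPochhammer q k * (1 - q ^ (k + 1)) :=
  prod_range_succ _ _

theorem qFalling_zero_right (q : R) (n : ℕ) : qFalling q n 0 = 1 := prod_range_zero _

theorem qFalling_succ (q : R) (n k : ℕ) :
    qFalling q n (k + 1) = qFalling q n k * (1 - q ^ (n - k)) :=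
  prod_range_succ _ _

theorem qFalling_succ_succ (q : R) (n k : ℕ) :
    qFalling q (n + 1) (k + 1) = (1 - q ^ (n + 1)) * qFalling q n k := by
  rw [qFalling, prod_range_succ', mul_comm]
  simp only [Nat.succ_sub_succ, Nat.sub_zero, qFalling]

theorem qFalling_eq_zero_of_lt (q : R) {n k : ℕ} (h : n < k) : qFalling q n k = 0 :=
  prod_eq_zero (mem_range.2 h) (by simp)

theorem pow_mul_qFalling_succ_succ (q : R) (n k : ℕ) :
    q ^ k * qFalling q (n + 1) (k + 1) =
      q ^ k * qFalling q n (k + 1) + q ^ n * (1 - q ^ (k + 1)) * qFalling q n k := by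
  rw [qFalling_succ_succ, qFalling_succ]
  rcases le_or_gt k n with h | h
  · have hpow : q ^ k * q ^ (n - k) = q ^ n := by rw [← pow_add, Nat.add_sub_cancel' h]
    linear_combination qFalling q n k * hpow
  · rw [qFalling_eq_zero_of_lt q h]
    ring

theorem succ_mul_self_div_two (k : ℕ) : (k + 1) * k / 2 = k * (k - 1) / 2 + k := by
  have h := Nat.choose_two_right (k + 1)
  rw [Nat.add_sub_cancel] at h
  rw [← h, Nat.choose_succ_succ, Nat.choose_one_right, Nat.choose_two_right, add_comm]

theorem eulerCoeff_succ (q : K) (k : ℕ) :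
    eulerCoeff q (k + 1) = eulerCoeff q k * (q ^ k / (1 - q ^ (k + 1))) := by
  rw [eulerCoeff, eulerCoeff, Nat.add_sub_cancel, succ_mul_self_div_two, pow_add,
    qPochhammer_succ, mul_div_mul_comm]

theorem rotheCoeff_zero_right (q : K) (n : ℕ) : rotheCoeff q n 0 = 1 := by
  simp [rotheCoeff, eulerCoeff, qPochhammer, qFalling_zero_right]

theorem rotheCoeff_eq_zero_of_lt (q : K) {n k : ℕ} (h : n < k) : rotheCoeff q n k = 0 := by
  rw [rotheCoeff, qFalling_eq_zero_of_lt q h, mul_zero]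

theorem rotheCoeff_succ_succ {q : K} (n k : ℕ) (hq : q ^ (k + 1) ≠ 1) :
    rotheCoeff q (n + 1) (k + 1) = rotheCoeff q n (k + 1) + q ^ n * rotheCoeff q n k := by
  have hq' : 1 - q ^ (k + 1) ≠ 0 := sub_ne_zero.2 hq.symm
  simp only [rotheCoeff, eulerCoeff_succ]
  field_simp
  linear_combination eulerCoeff q k * pow_mul_qFalling_succ_succ q n k

theorem prod_one_add_pow_mul_eq_sum_rotheCoeff {q : K} (hq : ∀ k, q ^ (k + 1) ≠ 1) (a : K)
    (n : ℕ) :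
    ∏ j ∈ range n, (1 + q ^ j * a) = ∑ k ∈ range (n + 1), rotheCoeff q n k * a ^ k := by
  induction n with
  | zero => simp [rotheCoeff_zero_right]
  | succ n ih =>
    have hshift : ∑ k ∈ range (n + 1), rotheCoeff q n (k + 1) * a ^ (k + 1) + 1 =
        ∑ k ∈ range (n + 1), rotheCoeff q n k * a ^ k := by
      rw [sum_range_succ' (fun k => rotheCoeff q n k * a ^ k),
        sum_range_succ (fun k => rotheCoeff q n (k + 1) * a ^ (k + 1)),
        rotheCoeff_eq_zero_of_lt q n.lt_succ_self, rotheCoeff_zero_right]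
      ring
    calc ∏ j ∈ range (n + 1), (1 + q ^ j * a)
        = (∑ k ∈ range (n + 1), rotheCoeff q n k * a ^ k) * (1 + q ^ n * a) := by
          rw [prod_range_succ, ih]
      _ = ∑ k ∈ range (n + 1), rotheCoeff q n (k + 1) * a ^ (k + 1) + 1
            + ∑ k ∈ range (n + 1), q ^ n * rotheCoeff q n k * a ^ (k + 1) := by
          rw [hshift, mul_add, mul_one, sum_mul]
          congr 1
          exact sum_congr rfl fun k _ => by ring
      _ = ∑ k ∈ range (n + 2), rotheCoeff q (n + 1) k * a ^ k := by
          rw [sum_range_succ' _ (n + 1), rotheCoeff_zero_right, pow_zero, one_mul, add_right_comm,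
            ← sum_add_distrib]
          congr 1
          exact sum_congr rfl fun k _ => by rw [rotheCoeff_succ_succ n k (hq k)]; ring

end Algebra

section Analysis

variable {K : Type*} [NormedField K] {q : K}

theorem pow_succ_ne_one_of_norm_lt_one (hq : ‖q‖ < 1) (k : ℕ) : q ^ (k + 1) ≠ 1 := by
  intro h
  have := congrArg norm h
  rw [norm_pow, norm_one] at this
  exact (pow_lt_one₀ (norm_nonneg q) hq k.succ_ne_zero).ne this

theorem norm_qFalling_le (hq : ‖q‖ < 1) (n k : ℕ) : ‖qFalling q n k‖ ≤ 2 ^ k := by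
  calc ‖qFalling q n k‖ ≤ ∏ j ∈ range k, ‖1 - q ^ (n - j)‖ := Finset.norm_prod_le _ _
    _ ≤ ∏ j ∈ range k, (1 + 1 : ℝ) := by
      gcongr with j
      refine (norm_sub_le _ _).trans ?_
      rw [norm_one, norm_pow]
      gcongr
      exact pow_le_one₀ (norm_nonneg q) hq.le
    _ = 2 ^ k := by norm_num

theorem tendsto_qFalling_atTop (hq : ‖q‖ < 1) (k : ℕ) :
    Tendsto (fun n => qFalling q n k) atTop (𝓝 1) := by
  have hpow := tendsto_pow_atTop_nhds_zero_of_norm_lt_one hq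
  rw [← prod_const_one (s := range k)]
  refine tendsto_finsetProd _ fun j _ => ?_
  simpa using (hpow.comp (tendsto_sub_atTop_nat j)).const_sub 1

theorem summable_norm_eulerCoeff_mul_pow (hq : ‖q‖ < 1) (r : ℝ) :
    Summable fun k => ‖eulerCoeff q k‖ * r ^ k := by
  have hpow := tendsto_pow_atTop_nhds_zero_of_norm_lt_one hq
  have hratio : Tendsto (fun k => ‖q‖ ^ k * |r| / ‖1 - q ^ (k + 1)‖) atTop (𝓝 0) := by
    have hden := ((hpow.comp (tendsto_add_atTop_nat 1)).const_sub 1).norm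
    have h := ((tendsto_pow_atTop_nhds_zero_of_lt_one (norm_nonneg q) hq).mul_const |r|).div
      hden (by simp)
    rwa [zero_mul, zero_div] at h
  refine summable_of_ratio_norm_eventually_le (r := 1 / 2) (by norm_num) ?_
  filter_upwards [hratio.eventually (ge_mem_nhds (show (0 : ℝ) < 1 / 2 by norm_num))] with k hk
  calc ‖‖eulerCoeff q (k + 1)‖ * r ^ (k + 1)‖
      = ‖q‖ ^ k * |r| / ‖1 - q ^ (k + 1)‖ * ‖‖eulerCoeff q k‖ * r ^ k‖ := by
        simp only [eulerCoeff_succ, norm_mul, norm_div, norm_pow, Real.norm_eq_abs, abs_norm]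
        ring
    _ ≤ 1 / 2 * ‖‖eulerCoeff q k‖ * r ^ k‖ := by gcongr

theorem tendsto_prod_one_add_pow_mul [CompleteSpace K] (hq : ‖q‖ < 1) (a : K) :
    Tendsto (fun n => ∏ j ∈ range n, (1 + q ^ j * a)) atTop
      (𝓝 (∑' k, eulerCoeff q k * a ^ k)) := by
  have hpartial (n : ℕ) :
      ∏ j ∈ range n, (1 + q ^ j * a) = ∑' k, rotheCoeff q n k * a ^ k := by
    rw [prod_one_add_pow_mul_eq_sum_rotheCoeff (pow_succ_ne_one_of_norm_lt_one hq) a n,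
      tsum_eq_sum (s := range (n + 1)) fun k hk => by
        rw [rotheCoeff_eq_zero_of_lt q (by simp at hk; omega), zero_mul]]
  simp only [hpartial]
  refine tendsto_tsum_of_dominated_convergence
    (summable_norm_eulerCoeff_mul_pow hq (2 * ‖a‖)) (fun k => ?_)
    (Eventually.of_forall fun n k => ?_)
  · simpa [rotheCoeff, mul_right_comm] using
      ((tendsto_qFalling_atTop hq k).const_mul (eulerCoeff q k)).mul_const (a ^ k)
  · rw [rotheCoeff, norm_mul, norm_mul, norm_pow, mul_pow, mul_assoc]
    gcongr ‖_‖ * (?_ * _)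
    exact norm_qFalling_le hq n k

theorem multipliable_one_add_pow_mul [CompleteSpace K] (hq : ‖q‖ < 1) (a : K) :
    Multipliable fun k => 1 + q ^ k * a :=
  multipliable_one_add_of_summable <|
    ((summable_geometric_of_lt_one (norm_nonneg q) hq).mul_right ‖a‖).congr fun k => by
      rw [norm_mul, norm_pow]

theorem hasSum_eulerCoeff_mul_pow [CompleteSpace K] (hq : ‖q‖ < 1) (a : K) :
    HasSum (fun k => eulerCoeff q k * a ^ k) (∏' k, (1 + q ^ k * a)) := by
  rw [tendsto_nhds_unique (multipliable_one_add_pow_mul hq a).hasProd.tendsto_prod_nat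
    (tendsto_prod_one_add_pow_mul hq a)]
  exact ((summable_norm_eulerCoeff_mul_pow hq ‖a‖).congr fun k => by
    rw [norm_mul, norm_pow]).of_norm.hasSum

end Analysis

/-- For `0 < q < 1` and any complex `a`, the series
`E_q(a) = ∑ₖ q^{k(k-1)/2}/(q;q)_k · a^k` converges with sum equal to the
(convergent) infinite product `(-a;q)_∞ = ∏ₖ (1 + qᵏ a)`. -/
theorem Eq_series_eq_product (q : ℝ) (hq0 : 0 < q) (hq1 : q < 1) (a : ℂ) :
    Multipliable (fun k : ℕ => 1 + (q : ℂ) ^ k * a) ∧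
    HasSum
      (fun k : ℕ =>
        (((q ^ (k * (k - 1) / 2) / ∏ j ∈ Finset.range k, (1 - q ^ (j + 1))) : ℝ) : ℂ) * a ^ k)
      (∏' k : ℕ, (1 + (q : ℂ) ^ k * a)) := by
  have hq : ‖(q : ℂ)‖ < 1 := by rwa [Complex.norm_real, Real.norm_of_nonneg hq0.le]
  have hcoeff (k : ℕ) :
      ((q ^ (k * (k - 1) / 2) / ∏ j ∈ range k, (1 - q ^ (j + 1)) : ℝ) : ℂ) =
        eulerCoeff (q : ℂ) k := by
    push_cast [eulerCoeff, qPochhammer]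
    rfl
  simp only [hcoeff]
  exact ⟨multipliable_one_add_pow_mul hq a, hasSum_eulerCoeff_mul_pow hq a⟩
end

section
/- The comultiplication maps Δ_{μν}^υ on the algebras U_q(μ,ν) are coassociative: for all real μ, ν, υ, ρ, one has (Δ_{μυ}^ρ ⊗ id) ∘ Δ_{μν}^υ = (id ⊗ Δ_{ρν}^υ) ∘ Δ_{μν}^ρ as maps U_q(μ,ν) → U_q(μ,ρ) ⊗ U_q(ρ,υ) ⊗ U_q(υ,ν). -/
/-!
Both sides are algebra maps out of the universal algebra `U_q(μ,ν)`, so they agree as soon as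
they agree on `K`, `K⁻¹`, `E`, `F`. There both give `K ⊗ K ⊗ K`, `K⁻¹ ⊗ K⁻¹ ⊗ K⁻¹`,
`E ⊗ K ⊗ K + K⁻¹ ⊗ E ⊗ K + K⁻¹ ⊗ K⁻¹ ⊗ E` and the same expression with `F` in place of `E`.
-/

open TensorProduct

/-- The defining relations of the algebra `U_q(μ,ν)` for a quadruple of elements. -/
def UqRel (q μ ν : ℝ) {A : Type} [Ring A] [Algebra ℂ A]
    (K Ki E F : A) : Prop :=
  Ki * K = 1 ∧ K * Ki = 1 ∧
  K * E = (q : ℂ) • (E * K) ∧ K * F = ((q : ℂ))⁻¹ • (F * K) ∧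
  E * F - F * E = (((q - q⁻¹)⁻¹ : ℝ) : ℂ) • ((μ : ℂ) • (K * K) - (ν : ℂ) • (Ki * Ki))

/-- `A` with its distinguished generators is a model of the universal algebra `U_q(μ,ν)`. -/
def IsUniversalUq (q μ ν : ℝ) (A : Type) [Ring A] [Algebra ℂ A]
    (K Ki E F : A) : Prop :=
  UqRel q μ ν K Ki E F ∧
  ∀ (B : Type) (_ : Ring B) (_ : Algebra ℂ B) (K' Ki' E' F' : B),
    UqRel q μ ν K' Ki' E' F' →
    ∃! f : A →ₐ[ℂ] B, f K = K' ∧ f Ki = Ki' ∧ f E = E' ∧ f F = F'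

section

variable {q μ ν : ℝ} {A B : Type} [Ring A] [Algebra ℂ A] [Ring B] [Algebra ℂ B]
  {K Ki E F : A}

theorem UqRel.map (φ : A →ₐ[ℂ] B) (h : UqRel q μ ν K Ki E F) :
    UqRel q μ ν (φ K) (φ Ki) (φ E) (φ F) := by
  obtain ⟨hKiK, hKKi, hKE, hKF, hEF⟩ := h
  exact ⟨by simpa only [map_mul, map_one] using congrArg φ hKiK,
    by simpa only [map_mul, map_one] using congrArg φ hKKi,
    by simpa only [map_mul, map_smul] using congrArg φ hKE,
    by simpa only [map_mul, map_smul] using congrArg φ hKF,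
    by simpa only [map_mul, map_smul, map_sub] using congrArg φ hEF⟩

theorem IsUniversalUq.algHom_ext (h : IsUniversalUq q μ ν A K Ki E F) {f g : A →ₐ[ℂ] B}
    (hK : f K = g K) (hKi : f Ki = g Ki) (hE : f E = g E) (hF : f F = g F) : f = g := by
  obtain ⟨hrel, huniv⟩ := h
  obtain ⟨φ, -, hφ⟩ := huniv B inferInstance inferInstance _ _ _ _ (hrel.map g)
  exact (hφ f ⟨hK, hKi, hE, hF⟩).trans (hφ g ⟨rfl, rfl, rfl, rfl⟩).symm

end

theorem comultiplication_coassoc_general (q μ ν : ℝ)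
    {Uμν Uμυ Uυν Uμρ Uρυ Uρν : Type}
    [Ring Uμν] [Algebra ℂ Uμν] [Ring Uμυ] [Algebra ℂ Uμυ] [Ring Uυν] [Algebra ℂ Uυν]
    [Ring Uμρ] [Algebra ℂ Uμρ] [Ring Uρυ] [Algebra ℂ Uρυ] [Ring Uρν] [Algebra ℂ Uρν]
    (K1 Ki1 E1 F1 : Uμν) (K2 Ki2 E2 F2 : Uμυ) (K3 Ki3 E3 F3 : Uυν)
    (K4 Ki4 E4 F4 : Uμρ) (K5 Ki5 E5 F5 : Uρυ) (K6 Ki6 E6 F6 : Uρν)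
    (h1 : IsUniversalUq q μ ν Uμν K1 Ki1 E1 F1)
    -- Δ_{μν}^υ
    (D1 : Uμν →ₐ[ℂ] Uμυ ⊗[ℂ] Uυν)
    (hD1K : D1 K1 = K2 ⊗ₜ K3) (hD1Ki : D1 Ki1 = Ki2 ⊗ₜ Ki3)
    (hD1E : D1 E1 = E2 ⊗ₜ K3 + Ki2 ⊗ₜ E3) (hD1F : D1 F1 = F2 ⊗ₜ K3 + Ki2 ⊗ₜ F3)
    -- Δ_{μυ}^ρ
    (D2 : Uμυ →ₐ[ℂ] Uμρ ⊗[ℂ] Uρυ)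
    (hD2K : D2 K2 = K4 ⊗ₜ K5) (hD2Ki : D2 Ki2 = Ki4 ⊗ₜ Ki5)
    (hD2E : D2 E2 = E4 ⊗ₜ K5 + Ki4 ⊗ₜ E5) (hD2F : D2 F2 = F4 ⊗ₜ K5 + Ki4 ⊗ₜ F5)
    -- Δ_{μν}^ρ
    (D3 : Uμν →ₐ[ℂ] Uμρ ⊗[ℂ] Uρν)
    (hD3K : D3 K1 = K4 ⊗ₜ K6) (hD3Ki : D3 Ki1 = Ki4 ⊗ₜ Ki6)
    (hD3E : D3 E1 = E4 ⊗ₜ K6 + Ki4 ⊗ₜ E6) (hD3F : D3 F1 = F4 ⊗ₜ K6 + Ki4 ⊗ₜ F6)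
    -- Δ_{ρν}^υ
    (D4 : Uρν →ₐ[ℂ] Uρυ ⊗[ℂ] Uυν)
    (hD4K : D4 K6 = K5 ⊗ₜ K3) (hD4Ki : D4 Ki6 = Ki5 ⊗ₜ Ki3)
    (hD4E : D4 E6 = E5 ⊗ₜ K3 + Ki5 ⊗ₜ E3) (hD4F : D4 F6 = F5 ⊗ₜ K3 + Ki5 ⊗ₜ F3) :
    ∀ x : Uμν,
      (Algebra.TensorProduct.assoc ℂ ℂ ℂ Uμρ Uρυ Uυν)
          ((Algebra.TensorProduct.map D2 (AlgHom.id ℂ Uυν)) (D1 x)) =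
        (Algebra.TensorProduct.map (AlgHom.id ℂ Uμρ) D4) (D3 x) := by
  have coassoc :
      (Algebra.TensorProduct.assoc ℂ ℂ ℂ Uμρ Uρυ Uυν).toAlgHom.comp
          ((Algebra.TensorProduct.map D2 (AlgHom.id ℂ Uυν)).comp D1) =
        (Algebra.TensorProduct.map (AlgHom.id ℂ Uμρ) D4).comp D3 := by
    apply h1.algHom_ext <;>
      simp [hD1K, hD1Ki, hD1E, hD1F, hD2K, hD2Ki, hD2E, hD2F, hD3K, hD3Ki, hD3E, hD3F,
        hD4K, hD4Ki, hD4E, hD4F, add_tmul, tmul_add, add_assoc]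
  exact DFunLike.congr_fun coassoc

/-- Coassociativity of the comultiplications `Δ_{μν}^υ` of the `U_q(μ,ν)`:
`(Δ_{μυ}^ρ ⊗ id) ∘ Δ_{μν}^υ = (id ⊗ Δ_{ρν}^υ) ∘ Δ_{μν}^ρ` (after the canonical
associativity identification of triple tensor products). -/
theorem comultiplication_coassoc (q μ ν υ ρ : ℝ) (hq0 : 0 < q) (hq1 : q < 1)
    {Uμν Uμυ Uυν Uμρ Uρυ Uρν : Type}
    [Ring Uμν] [Algebra ℂ Uμν] [Ring Uμυ] [Algebra ℂ Uμυ] [Ring Uυν] [Algebra ℂ Uυν]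
    [Ring Uμρ] [Algebra ℂ Uμρ] [Ring Uρυ] [Algebra ℂ Uρυ] [Ring Uρν] [Algebra ℂ Uρν]
    (K1 Ki1 E1 F1 : Uμν) (K2 Ki2 E2 F2 : Uμυ) (K3 Ki3 E3 F3 : Uυν)
    (K4 Ki4 E4 F4 : Uμρ) (K5 Ki5 E5 F5 : Uρυ) (K6 Ki6 E6 F6 : Uρν)
    (h1 : IsUniversalUq q μ ν Uμν K1 Ki1 E1 F1)
    (h2 : UqRel q μ υ K2 Ki2 E2 F2) (h3 : UqRel q υ ν K3 Ki3 E3 F3)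
    (h4 : UqRel q μ ρ K4 Ki4 E4 F4) (h5 : UqRel q ρ υ K5 Ki5 E5 F5)
    (h6 : UqRel q ρ ν K6 Ki6 E6 F6)
    -- Δ_{μν}^υ
    (D1 : Uμν →ₐ[ℂ] Uμυ ⊗[ℂ] Uυν)
    (hD1K : D1 K1 = K2 ⊗ₜ K3) (hD1Ki : D1 Ki1 = Ki2 ⊗ₜ Ki3)
    (hD1E : D1 E1 = E2 ⊗ₜ K3 + Ki2 ⊗ₜ E3) (hD1F : D1 F1 = F2 ⊗ₜ K3 + Ki2 ⊗ₜ F3)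
    -- Δ_{μυ}^ρ
    (D2 : Uμυ →ₐ[ℂ] Uμρ ⊗[ℂ] Uρυ)
    (hD2K : D2 K2 = K4 ⊗ₜ K5) (hD2Ki : D2 Ki2 = Ki4 ⊗ₜ Ki5)
    (hD2E : D2 E2 = E4 ⊗ₜ K5 + Ki4 ⊗ₜ E5) (hD2F : D2 F2 = F4 ⊗ₜ K5 + Ki4 ⊗ₜ F5)
    -- Δ_{μν}^ρ
    (D3 : Uμν →ₐ[ℂ] Uμρ ⊗[ℂ] Uρν)
    (hD3K : D3 K1 = K4 ⊗ₜ K6) (hD3Ki : D3 Ki1 = Ki4 ⊗ₜ Ki6)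
    (hD3E : D3 E1 = E4 ⊗ₜ K6 + Ki4 ⊗ₜ E6) (hD3F : D3 F1 = F4 ⊗ₜ K6 + Ki4 ⊗ₜ F6)
    -- Δ_{ρν}^υ
    (D4 : Uρν →ₐ[ℂ] Uρυ ⊗[ℂ] Uυν)
    (hD4K : D4 K6 = K5 ⊗ₜ K3) (hD4Ki : D4 Ki6 = Ki5 ⊗ₜ Ki3)
    (hD4E : D4 E6 = E5 ⊗ₜ K3 + Ki5 ⊗ₜ E3) (hD4F : D4 F6 = F5 ⊗ₜ K3 + Ki5 ⊗ₜ F3) :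
    ∀ x : Uμν,
      (Algebra.TensorProduct.assoc ℂ ℂ ℂ Uμρ Uρυ Uυν)
          ((Algebra.TensorProduct.map D2 (AlgHom.id ℂ Uυν)) (D1 x)) =
        (Algebra.TensorProduct.map (AlgHom.id ℂ Uμρ) D4) (D3 x) :=
  comultiplication_coassoc_general q μ ν K1 Ki1 E1 F1 K2 Ki2 E2 F2 K3 Ki3 E3 F3 K4 Ki4 E4 F4 K5 Ki5
    E5 F5 K6 Ki6 E6 F6 h1 D1 hD1K hD1Ki hD1E hD1F D2 hD2K hD2Ki hD2E hD2F D3 hD3K hD3Ki hD3E hD3F D4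
    hD4K hD4Ki hD4E hD4F
end

section
/- Let Θ(K), Θ(E), Θ(F) be the operators on the space of finitely supported sequences ℂ[ℕ] ⊆ ℓ²(ℕ) defined by Θ(K)e_n = q^{-n}e_n, and via Θ(E)K⁻¹·(q^{1/2}(q⁻¹−q)) = X, Θ(K)⁻² = Z (with X, Z the standard Podleś-sphere operators). Then Θ defines a *-representation of U_q(0,+): the operators satisfy Θ(K)Θ(E) = qΘ(E)Θ(K), Θ(K)Θ(F) = q⁻¹Θ(F)Θ(K), [Θ(E),Θ(F)] = −λΘ(K)⁻², and Θ(E)* = Θ(F) on ℂ[ℕ]. -/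
/-- The `ℓ²`-inner product on the space `ℂ[ℕ]` of finitely supported sequences
(conjugate-linear in the first variable). -/
noncomputable def finsuppInner (f g : ℕ →₀ ℂ) : ℂ :=
  f.sum fun n c => (starRingEnd ℂ) c * g n

/-!
On the basis `e_n`, `Θ(K)` and `Θ(K)⁻¹` are diagonal, `Θ(E)` is a weighted shift
`e_{n+1} ↦ c_n e_n` with real weights and `Θ(F)` is the opposite shift `e_n ↦ c_n e_{n+1}` with
the same weights. Hence the `K`-relations only compare consecutive diagonal entries, adjointness
holds because the weights are real, and `[Θ(E), Θ(F)] e_n = (c_n² - c_{n-1}²) e_n` is diagonal.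
Since `c_n² = q⁻¹ λ² (1 - q^{2(n+1)})` and `q⁻¹ λ² (1 - q²) = -λ`, these differences telescope
to `-λ q^{2n}`.
-/

open Finsupp

noncomputable def finsuppInnerₛₗ : (ℕ →₀ ℂ) →ₗ⋆[ℂ] (ℕ →₀ ℂ) →ₗ[ℂ] ℂ :=
  LinearMap.mk₂'ₛₗ (starRingEnd ℂ) (RingHom.id ℂ) finsuppInner
    (fun _ _ _ => sum_add_index' (by simp) (by simp [add_mul]))
    (fun _ _ _ => by
      rw [finsuppInner, sum_smul_index' (by simp), finsuppInner, smul_eq_mul, mul_sum]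
      simp only [smul_eq_mul, map_mul, mul_assoc])
    (fun _ _ _ => by simp only [finsuppInner, coe_add, Pi.add_apply, mul_add, sum_add])
    (fun _ _ _ => by
      simp only [finsuppInner, coe_smul, Pi.smul_apply, smul_eq_mul, RingHom.id_apply, mul_sum,
        mul_left_comm])

theorem finsuppInner_map_eq_of_single {T S : (ℕ →₀ ℂ) →ₗ[ℂ] (ℕ →₀ ℂ)}
    (h : ∀ m n, finsuppInner (T (single m 1)) (single n 1) =
      finsuppInner (single m 1) (S (single n 1))) (f g : ℕ →₀ ℂ) :
    finsuppInner (T f) g = finsuppInner f (S g) := by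
  refine LinearMap.congr_fun₂ (LinearMap.ext_basis (ρ₁₂ := starRingEnd ℂ)
    (B := finsuppInnerₛₗ.comp T) (B' := finsuppInnerₛₗ.compl₂ S)
    Finsupp.basisSingleOne Finsupp.basisSingleOne fun m n => ?_) f g
  simp only [coe_basisSingleOne, LinearMap.comp_apply, LinearMap.compl₂_apply]
  exact h m n

section WeightedShift

variable {D T S : (ℕ →₀ ℂ) →ₗ[ℂ] (ℕ →₀ ℂ)} {c d : ℕ → ℂ} {r : ℂ}

theorem diagonal_comp_lowering (hD : ∀ n, D (single n 1) = d n • single n 1)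
    (hT0 : T (single 0 1) = 0) (hT : ∀ n, T (single (n + 1) 1) = c n • single n 1)
    (hd : ∀ n, d n = r * d (n + 1)) :
    D ∘ₗ T = r • (T ∘ₗ D) := by
  ext (_ | n) : 2
  · simp only [lsingle_apply, LinearMap.comp_apply, LinearMap.smul_apply, hT0, hD, map_zero,
      map_smul, smul_zero]
  · simp only [lsingle_apply, LinearMap.comp_apply, LinearMap.smul_apply, hT, hD, map_smul,
      smul_smul, hd n]
    congr 1
    ring

theorem diagonal_comp_raising (hD : ∀ n, D (single n 1) = d n • single n 1)
    (hS : ∀ n, S (single n 1) = c n • single (n + 1) 1)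
    (hd : ∀ n, d (n + 1) = r * d n) :
    D ∘ₗ S = r • (S ∘ₗ D) := by
  ext n : 2
  simp only [lsingle_apply, LinearMap.comp_apply, LinearMap.smul_apply, hS, hD, map_smul,
    smul_smul, hd n]
  congr 1
  ring

theorem lowering_comp_raising_sub (hD : ∀ n, D (single n 1) = d n • single n 1)
    (hT0 : T (single 0 1) = 0) (hT : ∀ n, T (single (n + 1) 1) = c n • single n 1)
    (hS : ∀ n, S (single n 1) = c n • single (n + 1) 1)
    (hd0 : c 0 * c 0 = d 0) (hd : ∀ n, c (n + 1) * c (n + 1) - c n * c n = d (n + 1)) :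
    T ∘ₗ S - S ∘ₗ T = D := by
  ext (_ | n) : 2
  · simp only [lsingle_apply, LinearMap.sub_apply, LinearMap.comp_apply, hT0, hT, hS, hD,
      map_smul, smul_smul, map_zero, sub_zero, hd0]
  · simp only [lsingle_apply, LinearMap.sub_apply, LinearMap.comp_apply, hT, hS, hD, map_smul,
      smul_smul, ← sub_smul, hd n]

theorem finsuppInner_lowering_eq_raising {c : ℕ → ℝ}
    (hT0 : T (single 0 1) = 0) (hT : ∀ n, T (single (n + 1) 1) = (c n : ℂ) • single n 1)
    (hS : ∀ n, S (single n 1) = (c n : ℂ) • single (n + 1) 1) (f g : ℕ →₀ ℂ) :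
    finsuppInner (T f) g = finsuppInner f (S g) := by
  refine finsuppInner_map_eq_of_single (fun m n => ?_) f g
  rcases m with _ | m
  · simp [hT0, hS, finsuppInner]
  · rcases eq_or_ne m n with rfl | hmn
    · simp [hT, hS, finsuppInner]
    · simp [hT, hS, finsuppInner, hmn]

end WeightedShift

theorem inv_mul_inv_sub_inv_sq_mul_one_sub_sq (q : ℝ) :
    q⁻¹ * (q - q⁻¹)⁻¹ ^ 2 * (1 - q ^ 2) = -(q - q⁻¹)⁻¹ := by
  rcases eq_or_ne q 0 with rfl | hq
  · simp
  rcases eq_or_ne (q - q⁻¹) 0 with hl | hl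
  · simp [hl]
  have h : q⁻¹ * (1 - q ^ 2) = -(q - q⁻¹) := by field_simp; ring
  rw [mul_comm q⁻¹, mul_assoc, h]
  field_simp

noncomputable def thetaWeight (q : ℝ) (n : ℕ) : ℝ :=
  -(q ^ (-(1/2 : ℝ))) * (q - q⁻¹)⁻¹ * √(1 - q ^ (2 * (n + 1)))

section thetaWeight

variable {q : ℝ}

theorem thetaWeight_mul_self (hq0 : 0 ≤ q) (hq1 : q ≤ 1) (n : ℕ) :
    thetaWeight q n * thetaWeight q n = q⁻¹ * (q - q⁻¹)⁻¹ ^ 2 * (1 - q ^ (2 * (n + 1))) := by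
  have hsqrt : √(1 - q ^ (2 * (n + 1))) ^ 2 = 1 - q ^ (2 * (n + 1)) :=
    Real.sq_sqrt (sub_nonneg.2 (pow_le_one₀ hq0 hq1))
  have hrpow : (q ^ (-(1/2 : ℝ))) ^ 2 = q⁻¹ := by
    rw [← Real.rpow_natCast, ← Real.rpow_mul hq0]
    norm_num [Real.rpow_neg_one]
  calc thetaWeight q n * thetaWeight q n
      = (q ^ (-(1/2 : ℝ))) ^ 2 * (q - q⁻¹)⁻¹ ^ 2 * √(1 - q ^ (2 * (n + 1))) ^ 2 := by
        rw [thetaWeight]; ring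
    _ = _ := by rw [hrpow, hsqrt]

theorem thetaWeight_zero_mul_self (hq0 : 0 ≤ q) (hq1 : q ≤ 1) :
    thetaWeight q 0 * thetaWeight q 0 = -(q - q⁻¹)⁻¹ := by
  rw [thetaWeight_mul_self hq0 hq1, ← inv_mul_inv_sub_inv_sq_mul_one_sub_sq q, zero_add, mul_one]

theorem thetaWeight_succ_mul_self_sub (hq0 : 0 ≤ q) (hq1 : q ≤ 1) (n : ℕ) :
    thetaWeight q (n + 1) * thetaWeight q (n + 1) - thetaWeight q n * thetaWeight q n =
      -(q - q⁻¹)⁻¹ * q ^ (2 * (n + 1)) := by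
  rw [thetaWeight_mul_self hq0 hq1, thetaWeight_mul_self hq0 hq1,
    ← inv_mul_inv_sub_inv_sq_mul_one_sub_sq q]
  ring

end thetaWeight

/-- The operators `Θ(K) e_n = q^{-n} e_n`, `Θ(K)⁻¹ e_n = q^n e_n`,
`Θ(E) e_{n+1} = -q^{-1/2} λ √(1-q^{2(n+1)}) e_n` (with `Θ(E) e_0 = 0`) and
`Θ(F) = Θ(E)*` on `ℂ[ℕ] ⊆ ℓ²(ℕ)` define a *-representation of `U_q(0,+)`:
`Θ(K)Θ(E) = qΘ(E)Θ(K)`, `Θ(K)Θ(F) = q⁻¹Θ(F)Θ(K)`, `[Θ(E),Θ(F)] = -λΘ(K)⁻²`, and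
`Θ(E)` and `Θ(F)` are mutually adjoint for the `ℓ²`-inner product. -/
theorem theta_representation (q : ℝ) (hq0 : 0 < q) (hq1 : q < 1)
    (ΘK ΘKi ΘE ΘF : (ℕ →₀ ℂ) →ₗ[ℂ] (ℕ →₀ ℂ))
    (hK : ∀ n : ℕ, ΘK (Finsupp.single n 1) = (((q ^ n)⁻¹ : ℝ) : ℂ) • Finsupp.single n 1)
    (hKi : ∀ n : ℕ, ΘKi (Finsupp.single n 1) = ((q ^ n : ℝ) : ℂ) • Finsupp.single n 1)
    (hE0 : ΘE (Finsupp.single 0 1) = 0)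
    (hE : ∀ n : ℕ, ΘE (Finsupp.single (n + 1) 1) =
      ((-(q ^ (-(1/2 : ℝ))) * (q - q⁻¹)⁻¹ * Real.sqrt (1 - q ^ (2 * (n + 1))) : ℝ) : ℂ) •
        Finsupp.single n 1)
    (hF : ∀ n : ℕ, ΘF (Finsupp.single n 1) =
      ((-(q ^ (-(1/2 : ℝ))) * (q - q⁻¹)⁻¹ * Real.sqrt (1 - q ^ (2 * (n + 1))) : ℝ) : ℂ) •
        Finsupp.single (n + 1) 1) :
    ΘK ∘ₗ ΘE = (q : ℂ) • (ΘE ∘ₗ ΘK) ∧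
    ΘK ∘ₗ ΘF = ((q : ℂ))⁻¹ • (ΘF ∘ₗ ΘK) ∧
    ΘE ∘ₗ ΘF - ΘF ∘ₗ ΘE = -((((q - q⁻¹)⁻¹ : ℝ) : ℂ) • (ΘKi ∘ₗ ΘKi)) ∧
    (∀ f g : ℕ →₀ ℂ, finsuppInner (ΘE f) g = finsuppInner f (ΘF g)) := by
  have hq : (q : ℂ) ≠ 0 := by exact_mod_cast hq0.ne'
  have hKi2 : ∀ n, (-((((q - q⁻¹)⁻¹ : ℝ) : ℂ) • (ΘKi ∘ₗ ΘKi))) (single n 1) =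
      ((-(q - q⁻¹)⁻¹ * q ^ (2 * n) : ℝ) : ℂ) • single n 1 := by
    intro n
    simp only [LinearMap.neg_apply, LinearMap.smul_apply, LinearMap.comp_apply, hKi, map_smul,
      smul_smul, ← neg_smul]
    push_cast
    ring_nf
  refine ⟨diagonal_comp_lowering hK hE0 hE fun n => ?_, diagonal_comp_raising hK hF fun n => ?_,
    lowering_comp_raising_sub (c := fun n => (thetaWeight q n : ℂ)) hKi2 hE0 hE hF ?_ fun n => ?_,
    finsuppInner_lowering_eq_raising (c := thetaWeight q) hE0 hE hF⟩
  · push_cast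
    field_simp
    ring
  · push_cast
    rw [pow_succ, mul_inv, mul_comm]
  · exact_mod_cast (thetaWeight_zero_mul_self hq0.le hq1.le).trans (by ring)
  · exact_mod_cast thetaWeight_succ_mul_self_sub hq0.le hq1.le n
end

section
/- Let u : ℓ²(ℕ)⊗ℓ²(ℤ) → ℓ²(ℤ)⊗ℓ²(ℤ) be the canonical isometric embedding, L = u·((q²b*b; q²)_∞)^{1/2} with b = (Σ_k q^k e_{kk})⊗S, a = (Σ_{k≥1}√(1−q^{2k})e_{k−1,k})⊗1, and v = S*⊗1 on ℓ²(ℤ)⊗ℓ²(ℤ). Then La* = v*L and La = vL(1 − b*b). -/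
open ContinuousLinearMap

/-- `(q²;q²)_n = ∏_{j=1}^n (1-q^{2j})`. -/
noncomputable def qPochN (q : ℝ) (n : ℕ) : ℝ := ∏ j ∈ Finset.range n, (1 - q ^ (2 * (j + 1)))

/-- `(q²;q²)_∞ = ∏_{j≥1} (1-q^{2j})`. -/
noncomputable def qPochInf (q : ℝ) : ℝ := ∏' j : ℕ, (1 - q ^ (2 * (j + 1)))

/-!
All operators involved are weighted shifts along the Hilbert bases, and the adjoint of a weighted
shift is the backward shift with conjugated weights. Checking on basis vectors, `1 - b*b` is
diagonal with eigenvalues `1 - q^{2n}`, and both identities reduce to the recursion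
`(q²;q²)_{n+1} = (q²;q²)_n (1 - q^{2(n+1)})`: the weights of `L` at levels `n` and `n + 1`
differ exactly by the weight `√(1 - q^{2(n+1)})` of `a`.
-/

open scoped InnerProductSpace

namespace HilbertBasis

variable {𝕜 ι ι' κ H H' : Type*} [RCLike 𝕜]
  [NormedAddCommGroup H] [InnerProductSpace 𝕜 H] [NormedAddCommGroup H'] [InnerProductSpace 𝕜 H']

theorem ext_continuousLinearMap (e : HilbertBasis ι 𝕜 H) {T S : H →L[𝕜] H'}
    (h : ∀ i, T (e i) = S (e i)) : T = S :=
  ContinuousLinearMap.ext_on (Submodule.dense_iff_topologicalClosure_eq_top.mpr e.dense_span)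
    (by rintro _ ⟨i, rfl⟩; exact h i)

variable [CompleteSpace H] [CompleteSpace H']

theorem adjoint_apply_eq_of_inner (e : HilbertBasis ι 𝕜 H) {T : H →L[𝕜] H'} {x : H'} {y : H}
    (h : ∀ i, ⟪T (e i), x⟫_𝕜 = ⟪e i, y⟫_𝕜) : adjoint T x = y := by
  apply e.repr.injective
  ext i
  simp only [e.repr_apply_apply, adjoint_inner_right, h]

theorem adjoint_apply_of_weightedShift (e : HilbertBasis ι 𝕜 H) (f : HilbertBasis ι' 𝕜 H')
    {σ : ι' → ι} (hσ : Function.Injective σ) (c : ι' → 𝕜) {T : H →L[𝕜] H'}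
    (hT : ∀ j, T (e (σ j)) = c j • f j) (hT₀ : ∀ i ∉ Set.range σ, T (e i) = 0) (j : ι') :
    adjoint T (f j) = (starRingEnd 𝕜) (c j) • e (σ j) := by
  classical
  have he := orthonormal_iff_ite.mp e.orthonormal
  have hf := orthonormal_iff_ite.mp f.orthonormal
  refine e.adjoint_apply_eq_of_inner fun i ↦ ?_
  rw [inner_smul_right, he]
  by_cases hi : i ∈ Set.range σ
  · obtain ⟨k, rfl⟩ := hi
    rw [hT, inner_smul_left, hf]
    by_cases hkj : k = j
    · simp [hkj]
    · simp [hkj, hσ.ne hkj]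
  · rw [hT₀ i hi, inner_zero_left, if_neg (by rintro rfl; exact hi ⟨j, rfl⟩), mul_zero]

theorem adjoint_apply_of_lowering_fst (e : HilbertBasis (ℕ × κ) 𝕜 H) (c : ℕ → 𝕜)
    {T : H →L[𝕜] H} (hT₀ : ∀ m, T (e (0, m)) = 0)
    (hT : ∀ n m, T (e (n + 1, m)) = c n • e (n, m)) (n : ℕ) (m : κ) :
    adjoint T (e (n, m)) = (starRingEnd 𝕜) (c n) • e (n + 1, m) := by
  refine e.adjoint_apply_of_weightedShift e (σ := fun j ↦ (j.1 + 1, j.2))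
    (fun i j h ↦ by simpa [Prod.ext_iff] using h) (fun j ↦ c j.1) (fun j ↦ hT j.1 j.2) ?_ (n, m)
  rintro ⟨_ | n, m⟩ hi
  exacts [hT₀ m, absurd ⟨(n, m), rfl⟩ hi]

theorem adjoint_apply_of_raising_snd (e : HilbertBasis (κ × ℤ) 𝕜 H) (c : κ → 𝕜)
    {T : H →L[𝕜] H} (hT : ∀ n m, T (e (n, m)) = c n • e (n, m + 1)) (n : κ) (m : ℤ) :
    adjoint T (e (n, m)) = (starRingEnd 𝕜) (c n) • e (n, m - 1) :=
  e.adjoint_apply_of_weightedShift e (σ := fun j ↦ (j.1, j.2 - 1))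
    (fun i j h ↦ by simpa [Prod.ext_iff] using h) (fun j ↦ c j.1)
    (fun j ↦ by simpa using hT j.1 (j.2 - 1)) (fun i hi ↦ absurd ⟨(i.1, i.2 + 1), by simp⟩ hi)
    (n, m)

theorem adjoint_apply_of_lowering_fst_int (e : HilbertBasis (ℤ × κ) 𝕜 H) {T : H →L[𝕜] H}
    (hT : ∀ n m, T (e (n, m)) = e (n - 1, m)) (n : ℤ) (m : κ) :
    adjoint T (e (n, m)) = e (n + 1, m) := by
  simpa using e.adjoint_apply_of_weightedShift e (σ := fun j ↦ (j.1 + 1, j.2))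
    (fun i j h ↦ by simpa [Prod.ext_iff] using h) (fun _ ↦ 1) (fun j ↦ by simp [hT])
    (fun i hi ↦ absurd ⟨(i.1 - 1, i.2), by simp⟩ hi) (n, m)

end HilbertBasis

section qPochhammer

variable {q : ℝ}

theorem one_sub_pow_two_mul_succ_pos (hq0 : 0 < q) (hq1 : q < 1) (n : ℕ) :
    0 < 1 - q ^ (2 * (n + 1)) :=
  sub_pos.mpr (pow_lt_one₀ hq0.le hq1 (by omega))

theorem qPochN_succ (q : ℝ) (n : ℕ) :
    qPochN q (n + 1) = qPochN q n * (1 - q ^ (2 * (n + 1))) :=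
  Finset.prod_range_succ _ n

theorem sqrt_one_sub_mul_sqrt_qPochInf_div_qPochN_succ (hq0 : 0 < q) (hq1 : q < 1) (n : ℕ) :
    √(1 - q ^ (2 * (n + 1))) * √(qPochInf q / qPochN q (n + 1)) = √(qPochInf q / qPochN q n) := by
  have hc := one_sub_pow_two_mul_succ_pos hq0 hq1 n
  rw [← Real.sqrt_mul hc.le, qPochN_succ, mul_div_assoc', mul_comm _ (qPochInf q),
    mul_div_mul_right _ _ hc.ne']

theorem sqrt_one_sub_mul_sqrt_qPochInf_div_qPochN (hq0 : 0 < q) (hq1 : q < 1) (n : ℕ) :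
    √(1 - q ^ (2 * (n + 1))) * √(qPochInf q / qPochN q n) =
      (1 - q ^ (2 * (n + 1))) * √(qPochInf q / qPochN q (n + 1)) := by
  rw [← sqrt_one_sub_mul_sqrt_qPochInf_div_qPochN_succ hq0 hq1, ← mul_assoc,
    Real.mul_self_sqrt (one_sub_pow_two_mul_succ_pos hq0 hq1 n).le]

end qPochhammer

/-- With `L(e_n⊗e_k) = ((q²;q²)_∞/(q²;q²)_n)^{1/2} e_n⊗e_k` (as a map
`ℓ²(ℕ)⊗ℓ²(ℤ) → ℓ²(ℤ)⊗ℓ²(ℤ)`), `v = S*⊗1`, and `a`, `b` the `SU_q(2)` generators,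
one has `La* = v*L` and `La = vL(1-b*b)`. -/
theorem L_commutation_relations (q : ℝ) (hq0 : 0 < q) (hq1 : q < 1)
    {H₁ H₂ : Type*} [NormedAddCommGroup H₁] [InnerProductSpace ℂ H₁] [CompleteSpace H₁]
    [NormedAddCommGroup H₂] [InnerProductSpace ℂ H₂] [CompleteSpace H₂]
    (e : HilbertBasis (ℕ × ℤ) ℂ H₁) (e₂ : HilbertBasis (ℤ × ℤ) ℂ H₂)
    (a b : H₁ →L[ℂ] H₁) (L : H₁ →L[ℂ] H₂) (v : H₂ →L[ℂ] H₂)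
    (ha0 : ∀ m : ℤ, a (e (0, m)) = 0)
    (ha : ∀ (k : ℕ) (m : ℤ), a (e (k + 1, m)) =
      ((Real.sqrt (1 - q ^ (2 * (k + 1))) : ℝ) : ℂ) • e (k, m))
    (hb : ∀ (k : ℕ) (m : ℤ), b (e (k, m)) = ((q ^ k : ℝ) : ℂ) • e (k, m + 1))
    (hL : ∀ (n : ℕ) (k : ℤ), L (e (n, k)) =
      ((Real.sqrt (qPochInf q / qPochN q n) : ℝ) : ℂ) • e₂ ((n : ℤ), k))
    (hv : ∀ m k : ℤ, v (e₂ (m, k)) = e₂ (m - 1, k)) :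
    L.comp (adjoint a) = (adjoint v).comp L ∧
    L.comp a = (v.comp L).comp (1 - adjoint b * b) := by
  have haA := e.adjoint_apply_of_lowering_fst _ ha0 ha
  have hbA := e.adjoint_apply_of_raising_snd _ hb
  have hvA := e₂.adjoint_apply_of_lowering_fst_int hv
  have hbb (n : ℕ) (m : ℤ) :
      (1 - adjoint b * b) (e (n, m)) = ((1 - q ^ (2 * n) : ℝ) : ℂ) • e (n, m) := by
    rw [sub_apply, one_apply_eq_self, mul_apply_eq_comp, hb, map_smul, hbA, Complex.conj_ofReal,
      add_sub_cancel_right, smul_smul]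
    push_cast
    rw [sub_smul, one_smul, ← pow_add, two_mul]
  constructor
  · refine e.ext_continuousLinearMap fun ⟨n, m⟩ ↦ ?_
    simp only [comp_apply, haA, hvA, Complex.conj_ofReal, map_smul, hL, smul_smul,
      ← Complex.ofReal_mul, sqrt_one_sub_mul_sqrt_qPochInf_div_qPochN_succ hq0 hq1, Nat.cast_succ]
  · refine e.ext_continuousLinearMap fun ⟨n, m⟩ ↦ ?_
    cases n with
    | zero => simp only [comp_apply, hbb, ha0]; simp
    | succ k =>
      simp only [comp_apply, hbb, ha, map_smul, hL, hv, smul_smul, ← Complex.ofReal_mul,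
        sqrt_one_sub_mul_sqrt_qPochInf_div_qPochN hq0 hq1, Nat.cast_succ, add_sub_cancel_right]
end

section
/- With L and v as above (L(e_n⊗e_k) = ((q²;q²)_∞/(q²;q²)_n)^{1/2} e_n⊗e_k, v = S*⊗1, a, b the SU_q(2) generators on ℓ²(ℕ)⊗ℓ²(ℤ)), for every n ∈ ℕ one has La^n = v^n L (b*b; q⁻²)_n, where (x;q⁻²)_n = Π_{k=0}^{n−1}(1 − q^{−2k}x). -/
open ContinuousLinearMap

/-!
On the basis `e (k, m)`, `a` lowers `k` with weight `√(1 - q^{2k})` and `b*b` is diagonal with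
eigenvalue `q^{2k}`, so both sides of the identity map `e (j, m)` to a multiple of `e₂ (j - n, m)`.
For `j < n` both multiples vanish: `a^n` runs into `e (0, m)`, and the factor
`1 - q^{-2j} q^{2j}` of the Pochhammer symbol is zero. For `j ≥ n` the Pochhammer symbol
evaluates to `∏_{i<n} (1 - q^{2(j-n+i+1)}) = (q²;q²)_j / (q²;q²)_{j-n}`, the square of the weight
picked up by `a^n`, and this is exactly the ratio of the normalisations of `L` at levels `j` and
`j - n`.
-/

open Finset

theorem List.prod_map_range {M : Type*} [CommMonoid M] (f : ℕ → M) (n : ℕ) :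
    ((List.range n).map f).prod = ∏ i ∈ Finset.range n, f i := by
  rw [prod_eq_multiset_prod]; rfl

section HilbertBasis

variable {ι 𝕜 E : Type*} [RCLike 𝕜] [NormedAddCommGroup E] [InnerProductSpace 𝕜 E]

theorem HilbertBasis.ext {F : Type*} [TopologicalSpace F] [AddCommMonoid F] [Module 𝕜 F]
    [T2Space F] (e : HilbertBasis ι 𝕜 E) {S T : E →L[𝕜] F} (h : ∀ i, S (e i) = T (e i)) :
    S = T :=
  ext_on (Submodule.dense_iff_topologicalClosure_eq_top.2 e.dense_span) (by grind [Set.EqOn])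

theorem HilbertBasis.ext_inner_left (e : HilbertBasis ι 𝕜 E) {x y : E}
    (h : ∀ i, inner 𝕜 (e i) x = inner 𝕜 (e i) y) : x = y :=
  e.repr.injective <| lp.ext <| funext fun i => by rw [e.repr_apply_apply, e.repr_apply_apply, h]

theorem HilbertBasis.adjoint_comp_self_apply [CompleteSpace E] {κ F : Type*}
    [NormedAddCommGroup F] [InnerProductSpace 𝕜 F] [CompleteSpace F] (e : HilbertBasis ι 𝕜 E)
    {f : κ → F} (hf : Orthonormal 𝕜 f) {σ : ι → κ} (hσ : σ.Injective) {c : ι → 𝕜}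
    {T : E →L[𝕜] F} (hT : ∀ i, T (e i) = c i • f (σ i)) (i : ι) :
    (adjoint T ∘L T) (e i) = (starRingEnd 𝕜 (c i) * c i) • e i := by
  classical
  refine e.ext_inner_left fun j => ?_
  rw [comp_apply, adjoint_inner_right, hT, hT, inner_smul_left, inner_smul_right, inner_smul_right,
    orthonormal_iff_ite.1 hf, orthonormal_iff_ite.1 e.orthonormal, hσ.eq_iff]
  split_ifs with hji
  · rw [hji]; ring
  · simp

end HilbertBasis

namespace ContinuousLinearMap

variable {R M : Type*} [TopologicalSpace M] [AddCommMonoid M]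

theorem list_prod_map_apply_eq_smul [CommSemiring R] [Module R M] {α : Type*} (l : List α)
    (T : α → M →L[R] M) (μ : α → R) {x : M} (h : ∀ i ∈ l, T i x = μ i • x) :
    (l.map T).prod x = (l.map μ).prod • x := by
  induction l with
  | nil => simp
  | cons i l ih =>
    rw [List.map_cons, List.prod_cons, mul_apply_eq_comp,
      ih fun k hk => h k (List.mem_cons_of_mem i hk), map_smul, h i List.mem_cons_self, smul_smul,
      List.map_cons, List.prod_cons, mul_comm]

theorem pow_apply_of_apply_eq_sub_one [Semiring R] [Module R M] {T : M →L[R] M} {g : ℤ → M}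
    (hT : ∀ m, T (g m) = g (m - 1)) (n : ℕ) (m : ℤ) : (T ^ n) (g m) = g (m - n) := by
  induction n generalizing m with
  | zero => simp
  | succ n ih =>
    rw [pow_succ, mul_apply_eq_comp, hT, ih]
    congr 1
    omega

section BackwardShift

variable [CommSemiring R] [Module R M] {T : M →L[R] M} {f : ℕ → M} {w : ℕ → R}

theorem pow_apply_add_eq_prod_smul (hT : ∀ k, T (f (k + 1)) = w k • f k) (n j : ℕ) :
    (T ^ n) (f (j + n)) = (∏ i ∈ range n, w (j + i)) • f j := by
  induction n generalizing j with
  | zero => simp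
  | succ n ih =>
    rw [pow_succ, mul_apply_eq_comp, ← add_assoc, hT, map_smul, ih, smul_smul, prod_range_succ,
      mul_comm]

theorem pow_apply_eq_zero_of_lt (h0 : T (f 0) = 0) (hT : ∀ k, T (f (k + 1)) = w k • f k)
    {n j : ℕ} (hj : j < n) : (T ^ n) (f j) = 0 := by
  induction n generalizing j with
  | zero => omega
  | succ n ih =>
    rw [pow_succ, mul_apply_eq_comp]
    rcases j with _ | j
    · rw [h0, map_zero]
    · rw [hT, map_smul, ih (by omega), smul_zero]

end BackwardShift

end ContinuousLinearMap

theorem prod_range_one_sub_inv_pow_mul_pow {K : Type*} [Field K] {q : K} (hq : q ≠ 0) (j n : ℕ) :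
    ∏ k ∈ range n, (1 - (q ^ (2 * k))⁻¹ * q ^ (2 * (j + n))) =
      ∏ k ∈ range n, (1 - q ^ (2 * (j + k + 1))) := by
  rw [← prod_range_reflect]
  refine prod_congr rfl fun k hk => ?_
  have hk : k < n := mem_range.1 hk
  rw [mul_comm, ← pow_sub₀ q hq (by omega)]
  congr 3
  omega

theorem qPochN_add (q : ℝ) (j n : ℕ) :
    qPochN q (j + n) = qPochN q j * ∏ i ∈ range n, (1 - q ^ (2 * (j + i + 1))) :=
  prod_range_add _ j n

theorem Real.sqrt_mul_sqrt_div_eq_mul_sqrt_div_mul {A : ℝ} (hA : 0 ≤ A) (x P : ℝ) :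
    √A * √(x / P) = A * √(x / (P * A)) := by
  rw [← div_div, Real.sqrt_div' _ hA, mul_div_left_comm, Real.div_sqrt, mul_comm]

theorem sqrt_prod_mul_sqrt_div_qPochN {q : ℝ} (hq0 : 0 ≤ q) (hq1 : q ≤ 1) (x : ℝ) (j n : ℕ) :
    (∏ i ∈ range n, √(1 - q ^ (2 * (j + i + 1)))) * √(x / qPochN q j) =
      (∏ i ∈ range n, (1 - q ^ (2 * (j + i + 1)))) * √(x / qPochN q (j + n)) := by
  have hpos : ∀ i, 0 ≤ 1 - q ^ (2 * (j + i + 1)) := fun i => sub_nonneg.2 (pow_le_one₀ hq0 hq1)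
  rw [← Real.sqrt_prod _ fun i _ => hpos i, qPochN_add,
    Real.sqrt_mul_sqrt_div_eq_mul_sqrt_div_mul (prod_nonneg fun i _ => hpos i)]

theorem L_aPow_commutation_general (q : ℝ) (hq0 : 0 < q) (hq1 : q < 1)
    {H₁ H₂ : Type*} [NormedAddCommGroup H₁] [InnerProductSpace ℂ H₁] [CompleteSpace H₁]
    [NormedAddCommGroup H₂] [InnerProductSpace ℂ H₂]
    (e : HilbertBasis (ℕ × ℤ) ℂ H₁) (e₂ : HilbertBasis (ℤ × ℤ) ℂ H₂)
    (a b : H₁ →L[ℂ] H₁) (L : H₁ →L[ℂ] H₂) (v : H₂ →L[ℂ] H₂)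
    (ha0 : ∀ m : ℤ, a (e (0, m)) = 0)
    (ha : ∀ (k : ℕ) (m : ℤ), a (e (k + 1, m)) =
      ((Real.sqrt (1 - q ^ (2 * (k + 1))) : ℝ) : ℂ) • e (k, m))
    (hb : ∀ (k : ℕ) (m : ℤ), b (e (k, m)) = ((q ^ k : ℝ) : ℂ) • e (k, m + 1))
    (hL : ∀ (n : ℕ) (k : ℤ), L (e (n, k)) =
      ((Real.sqrt (qPochInf q / qPochN q n) : ℝ) : ℂ) • e₂ ((n : ℤ), k))
    (hv : ∀ m k : ℤ, v (e₂ (m, k)) = e₂ (m - 1, k)) :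
    ∀ n : ℕ, L.comp (a ^ n) = ((v ^ n).comp L).comp
      (((List.range n).map fun k =>
        (1 : H₁ →L[ℂ] H₁) - (((q : ℂ) ^ (2 * k))⁻¹) • (adjoint b * b)).prod) := by
  have hq : (q : ℂ) ≠ 0 := by exact_mod_cast hq0.ne'
  have hbb (k : ℕ) (m : ℤ) : (adjoint b * b) (e (k, m)) = (q : ℂ) ^ (2 * k) • e (k, m) := by
    rw [ContinuousLinearMap.mul_def, e.adjoint_comp_self_apply e.orthonormal
      (σ := fun i => (i.1, i.2 + 1)) (fun i j h => by grind) (c := fun i => ((q ^ i.1 : ℝ) : ℂ))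
      (fun i => hb i.1 i.2)]
    simp [pow_mul', sq]
  intro n
  refine e.ext fun ⟨j, m⟩ => ?_
  rw [comp_apply, comp_apply, comp_apply, list_prod_map_apply_eq_smul _ _
    (fun k => 1 - ((q : ℂ) ^ (2 * k))⁻¹ * (q : ℂ) ^ (2 * j)) (fun k _ => by
      rw [sub_apply, smul_apply, hbb, smul_smul, one_apply_eq_self, sub_smul, one_smul]),
    List.prod_map_range]
  rcases lt_or_ge j n with hj | hj
  · rw [pow_apply_eq_zero_of_lt (f := fun k => e (k, m)) (ha0 m) (ha · m) hj,
      prod_eq_zero (mem_range.2 hj) (by rw [inv_mul_cancel₀ (pow_ne_zero _ hq), sub_self])]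
    simp
  obtain ⟨j, rfl⟩ := Nat.exists_eq_add_of_le' hj
  rw [pow_apply_add_eq_prod_smul (f := fun k => e (k, m)) (ha · m), map_smul, hL, map_smul, hL,
    map_smul, map_smul, pow_apply_of_apply_eq_sub_one (g := fun k => e₂ (k, m)) (hv · m),
    smul_smul, smul_smul, prod_range_one_sub_inv_pow_mul_pow hq,
    show ((j + n : ℕ) : ℤ) - n = j by push_cast; ring]
  congr 1
  exact_mod_cast sqrt_prod_mul_sqrt_div_qPochN hq0.le hq1.le (qPochInf q) j n

/-- With `L`, `v`, `a`, `b` as before, for every `n ∈ ℕ` one has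
`La^n = v^n L (b*b; q⁻²)_n`, where `(x;q⁻²)_n = ∏_{k=0}^{n-1}(1 - q^{-2k}x)`. -/
theorem L_aPow_commutation (q : ℝ) (hq0 : 0 < q) (hq1 : q < 1)
    {H₁ H₂ : Type*} [NormedAddCommGroup H₁] [InnerProductSpace ℂ H₁] [CompleteSpace H₁]
    [NormedAddCommGroup H₂] [InnerProductSpace ℂ H₂] [CompleteSpace H₂]
    (e : HilbertBasis (ℕ × ℤ) ℂ H₁) (e₂ : HilbertBasis (ℤ × ℤ) ℂ H₂)
    (a b : H₁ →L[ℂ] H₁) (L : H₁ →L[ℂ] H₂) (v : H₂ →L[ℂ] H₂)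
    (ha0 : ∀ m : ℤ, a (e (0, m)) = 0)
    (ha : ∀ (k : ℕ) (m : ℤ), a (e (k + 1, m)) =
      ((Real.sqrt (1 - q ^ (2 * (k + 1))) : ℝ) : ℂ) • e (k, m))
    (hb : ∀ (k : ℕ) (m : ℤ), b (e (k, m)) = ((q ^ k : ℝ) : ℂ) • e (k, m + 1))
    (hL : ∀ (n : ℕ) (k : ℤ), L (e (n, k)) =
      ((Real.sqrt (qPochInf q / qPochN q n) : ℝ) : ℂ) • e₂ ((n : ℤ), k))
    (hv : ∀ m k : ℤ, v (e₂ (m, k)) = e₂ (m - 1, k)) :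
    ∀ n : ℕ, L.comp (a ^ n) = ((v ^ n).comp L).comp
      (((List.range n).map fun k =>
        (1 : H₁ →L[ℂ] H₁) - (((q : ℂ) ^ (2 * k))⁻¹) • (adjoint b * b)).prod) :=
  L_aPow_commutation_general q hq0 hq1 e e₂ a b L v ha0 ha hb hL hv
end

section
/- Define G_n(q) = (q²;q²)_n / (q^{n(n−1)/2}(1−q²)^n). In the Hopf *-algebra pairing between U_q(su(2)) and Pol(SU_q(2)) determined by ⟨K,a⟩ = q^{−1/2}, ⟨K,a*⟩ = q^{1/2}, ⟨E,b⟩ = 1, ⟨F,−qb*⟩ = 1 (all other generator pairings zero), one has for all s,r,t,n,l ∈ ℕ and m ∈ ℤ: ⟨K^m E^n F^l, a^r b^s (−qb*)^t⟩ = δ_{s,n} δ_{t,l} q^{m(−r+s−t)/2} q^{r(n+l)/2} G_n(q) G_l(q). -/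
open TensorProduct Module

/-- `G_n(q) = (q²;q²)_n / (q^{n(n-1)/2} (1-q²)^n)`. -/
noncomputable def Gfun (q : ℝ) (n : ℕ) : ℝ :=
  qPochN q n / (q ^ (n * (n - 1) / 2) * (1 - q ^ 2) ^ n)

/-- Integer powers `K^m` of the invertible generator `K` (with inverse `Ki`). -/
noncomputable def zpowGen {U : Type} [Monoid U] (K Ki : U) (m : ℤ) : U :=
  if 0 ≤ m then K ^ m.toNat else Ki ^ (-m).toNat

/-!
Pairing `x ∈ U_q(su(2))` with a product `g z` is pairing the contraction `Σ ⟨x₍₁₎, g⟩ x₍₂₎`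
with `z`. When `g` runs over the entries of the fundamental corepresentation
`u = (a, -qb*; b, a*)`, for which `Δ u_ij = Σ_k u_ik ⊗ u_kj`, these contractions form a matrix
`ρ(x) ∈ M₂(U)` that is multiplicative in `x`. Since `ρ(K)` is diagonal, `ρ(E)` lower and `ρ(F)`
upper triangular, the entries of `ρ(K^m E^n F^l)` against `a`, `b`, `-qb*` are
`q^{(n+l-m)/2} K^m E^n F^l` and multiples of `K^{m+1} E^{n-1} F^l`, `K^{m+1} E^n F^{l-1}` by
symmetric `q`-integers. Peeling `a`, `b`, `-qb*` off the monomial one at a time therefore gives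
recursions whose solution is the formula, because `G_n(q) = [n]_q!`.
-/

section QNumbers

variable {𝕜 : Type*} [Field 𝕜] {q : 𝕜}

/-- The symmetric quantum integer `[n]_q = (q ^ n - q ^ (-n)) / (q - q⁻¹)`. -/
def qNum (q : 𝕜) (n : ℕ) : 𝕜 := ∑ i ∈ Finset.range n, q ^ ((n : ℤ) - 1 - 2 * i)

def qFactorial (q : 𝕜) (n : ℕ) : 𝕜 := ∏ i ∈ Finset.range n, qNum q (i + 1)

theorem qNum_succ (hq : q ≠ 0) (n : ℕ) : qNum q (n + 1) = q * qNum q n + q⁻¹ ^ n := by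
  rw [qNum, qNum, Finset.sum_range_succ, Finset.mul_sum, inv_pow, ← zpow_natCast, ← zpow_neg]
  congr 1
  · refine Finset.sum_congr rfl fun i _ => ?_
    rw [← zpow_one_add₀ hq]
    push_cast
    ring_nf
  · push_cast
    ring_nf

theorem qNum_succ' (hq : q ≠ 0) (n : ℕ) : qNum q (n + 1) = q⁻¹ * qNum q n + q ^ n := by
  rw [qNum, qNum, Finset.sum_range_succ', Finset.mul_sum, ← zpow_neg_one, ← zpow_natCast]
  congr 1
  · refine Finset.sum_congr rfl fun i _ => ?_
    rw [← zpow_add₀ hq]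
    push_cast
    ring_nf
  · push_cast
    ring_nf

theorem qFactorial_succ (q : 𝕜) (n : ℕ) :
    qFactorial q (n + 1) = qNum q (n + 1) * qFactorial q n := by
  rw [qFactorial, Finset.prod_range_succ, mul_comm]
  rfl

theorem map_qFactorial {𝕜' : Type*} [Field 𝕜'] (f : 𝕜 →+* 𝕜') (q : 𝕜) (n : ℕ) :
    f (qFactorial q n) = qFactorial (f q) n := by
  simp [qFactorial, qNum, map_zpow₀]

theorem pow_mul_one_sub_sq_mul_qNum (hq : q ≠ 0) (n : ℕ) :
    q ^ n * (1 - q ^ 2) * qNum q (n + 1) = 1 - q ^ (2 * (n + 1)) := by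
  induction n with
  | zero => simp [qNum]
  | succ n ih =>
    rw [qNum_succ' hq]
    field_simp
    linear_combination q * ih

end QNumbers

theorem Gfun_succ {q : ℝ} (n : ℕ) :
    Gfun q (n + 1) = Gfun q n * ((1 - q ^ (2 * (n + 1))) / (q ^ n * (1 - q ^ 2))) := by
  rw [Gfun, Gfun, qPochN, Finset.prod_range_succ, ← qPochN, ← Finset.sum_range_id,
    ← Finset.sum_range_id, Finset.sum_range_succ, div_mul_div_comm]
  ring

theorem Gfun_eq_qFactorial {q : ℝ} (hq : q ≠ 0) (hq2 : q ^ 2 ≠ 1) (n : ℕ) :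
    Gfun q n = qFactorial q n := by
  induction n with
  | zero => simp [Gfun, qPochN, qFactorial]
  | succ n ih =>
    rw [Gfun_succ, ih, qFactorial_succ, ← pow_mul_one_sub_sq_mul_qNum hq]
    have : 1 - q ^ 2 ≠ 0 := sub_ne_zero.2 hq2.symm
    field_simp

section Contraction

variable {R U P : Type*} [CommRing R] [Ring U] [Algebra R U] [Ring P] [Algebra R P]
  (ΔU : U →ₐ[R] U ⊗[R] U) (pr : U →ₗ[R] Dual R P)

/-- `contract ΔU pr x g = Σ ⟨x₍₁₎, g⟩ x₍₂₎` in Sweedler notation. -/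
def contract (x : U) : P →ₗ[R] U := TensorProduct.lift (LinearMap.smulRightₗ ∘ₗ pr) (ΔU x)

variable {ΔU pr}

theorem pr_mul_eq_pr_contract
    (hmulP : ∀ (x : U) (y z : P), pr x (y * z) = dualDistrib R P P (map pr pr (ΔU x)) (y ⊗ₜ z))
    (x : U) (g z : P) : pr x (g * z) = pr (contract ΔU pr x g) z := by
  rw [hmulP, contract]
  induction ΔU x using TensorProduct.induction_on with
  | zero => simp
  | tmul x₁ x₂ => simp
  | add s t hs ht => simp [hs, ht]

theorem counit_contract
    (hmulP : ∀ (x : U) (y z : P), pr x (y * z) = dualDistrib R P P (map pr pr (ΔU x)) (y ⊗ₜ z))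
    {εU : U →ₐ[R] R} (hunitP : ∀ x : U, pr x 1 = εU x) (x : U) (g : P) :
    εU (contract ΔU pr x g) = pr x g := by
  rw [← hunitP, ← pr_mul_eq_pr_contract hmulP, mul_one]

variable {n : Type*} {ΔP : P →ₐ[R] P ⊗[R] P} {u : Matrix n n P}

theorem map_contract_mul [Fintype n] (hu : ∀ i j, ΔP (u i j) = ∑ k, u i k ⊗ₜ u k j)
    (hmulU : ∀ (x y : U) (z : P), pr (x * y) z = dualDistrib R P P (pr x ⊗ₜ pr y) (ΔP z))
    (x y : U) :
    u.map (contract ΔU pr (x * y)) = u.map (contract ΔU pr x) * u.map (contract ΔU pr y) := by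
  ext i j
  simp only [contract, map_mul, Matrix.map_apply, Matrix.mul_apply]
  induction ΔU x using TensorProduct.induction_on with
  | zero => simp
  | add s t hs ht => simp [add_mul, hs, ht, Finset.sum_add_distrib]
  | tmul x₁ x₂ =>
    induction ΔU y using TensorProduct.induction_on with
    | zero => simp
    | add s t hs ht => simp [mul_add, hs, ht, Finset.sum_add_distrib]
    | tmul y₁ y₂ =>
      simp only [Algebra.TensorProduct.tmul_mul_tmul, lift.tmul, LinearMap.comp_apply,
        LinearMap.smulRightₗ_apply_apply, hmulU, hu, smul_mul_smul, map_sum, dualDistrib_apply,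
        Finset.sum_smul]

theorem map_contract_one [DecidableEq n] {εP : P →ₐ[R] R} (hunitU : ∀ y : P, pr 1 y = εP y)
    (hε : u.map εP = 1) : u.map (contract ΔU pr 1) = 1 := by
  have h : u.map (contract ΔU pr 1) = (u.map εP).map (algebraMap R U) := by
    ext i j
    simp [contract, Algebra.TensorProduct.one_def, hunitU, Algebra.algebraMap_eq_smul_one]
  rw [h, hε, Matrix.map_one _ (map_zero _) (map_one _)]

variable (ΔU) in
def contractMatrixHom [Fintype n] [DecidableEq n] (hu : ∀ i j, ΔP (u i j) = ∑ k, u i k ⊗ₜ u k j)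
    (hmulU : ∀ (x y : U) (z : P), pr (x * y) z = dualDistrib R P P (pr x ⊗ₜ pr y) (ΔP z))
    {εP : P →ₐ[R] R} (hunitU : ∀ y : P, pr 1 y = εP y) (hε : u.map εP = 1) :
    U →* Matrix n n U where
  toFun x := u.map (contract ΔU pr x)
  map_one' := map_contract_one hunitU hε
  map_mul' := map_contract_mul hu hmulU

theorem map_pr_eq_map_counit
    (hmulP : ∀ (x : U) (y z : P), pr x (y * z) = dualDistrib R P P (map pr pr (ΔU x)) (y ⊗ₜ z))
    {εU : U →ₐ[R] R} (hunitP : ∀ x : U, pr x 1 = εU x) (x : U) :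
    u.map (pr x) = (u.map (contract ΔU pr x)).map εU := by
  ext i j
  simp [counit_contract hmulP hunitP]

end Contraction

section FundamentalMatrix

variable {𝕜 P : Type*} [Field 𝕜] [Ring P] [Algebra 𝕜 P] [Star P] (q : 𝕜) (a b : P)

def fundamentalMatrix : Matrix (Fin 2) (Fin 2) P := !![a, -(q • star b); b, star a]

variable {q a b}

theorem coproduct_fundamentalMatrix {ΔP : P →ₐ[𝕜] P ⊗[𝕜] P}
    (hΔa : ΔP a = a ⊗ₜ a - q • (star b ⊗ₜ b)) (hΔb : ΔP b = b ⊗ₜ a + star a ⊗ₜ b)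
    (hΔas : ΔP (star a) = star a ⊗ₜ star a - q • (b ⊗ₜ star b))
    (hΔbs : ΔP (star b) = star b ⊗ₜ star a + a ⊗ₜ star b) (i j : Fin 2) :
    ΔP (fundamentalMatrix q a b i j) =
      ∑ k, fundamentalMatrix q a b i k ⊗ₜ fundamentalMatrix q a b k j := by
  fin_cases i <;> fin_cases j <;>
    simp [fundamentalMatrix, Fin.sum_univ_two, hΔa, hΔb, hΔas, hΔbs, ← smul_tmul', tmul_smul,
      neg_tmul, tmul_neg, sub_eq_add_neg, add_comm]

theorem counit_fundamentalMatrix {εP : P →ₐ[𝕜] 𝕜} (hεa : εP a = 1) (hεas : εP (star a) = 1)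
    (hεb : εP b = 0) (hεbs : εP (star b) = 0) : (fundamentalMatrix q a b).map εP = 1 := by
  ext i j
  fin_cases i <;> fin_cases j <;> simp [fundamentalMatrix, hεa, hεas, hεb, hεbs]

section Generators

open Matrix

variable {U : Type*} [Ring U] [Algebra 𝕜 U] {ΔU : U →ₐ[𝕜] U ⊗[𝕜] U} {pr : U →ₗ[𝕜] Dual 𝕜 P}
  {v : 𝕜} {K Ki : U}

theorem map_contract_K (hΔK : ΔU K = K ⊗ₜ K) (hKa : pr K a = v⁻¹) (hKas : pr K (star a) = v)
    (hKb : pr K b = 0) (hKbs : pr K (star b) = 0) :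
    (fundamentalMatrix q a b).map (contract ΔU pr K) = diagonal ![v⁻¹ • K, v • K] := by
  ext i j
  fin_cases i <;> fin_cases j <;> simp [fundamentalMatrix, contract, hΔK, hKa, hKas, hKb, hKbs]

theorem map_contract_E {E : U} (hΔE : ΔU E = E ⊗ₜ K + Ki ⊗ₜ E)
    (hKi : (fundamentalMatrix q a b).map (pr Ki) = diagonal ![v, v⁻¹])
    (hEa : pr E a = 0) (hEb : pr E b = 1) (hEas : pr E (star a) = 0) (hEbs : pr E (star b) = 0) :
    (fundamentalMatrix q a b).map (contract ΔU pr E) = !![v • E, 0; K, v⁻¹ • E] := by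
  ext i j
  have h := congr_fun₂ hKi i j
  fin_cases i <;> fin_cases j <;>
    simp_all [fundamentalMatrix, contract]

theorem map_contract_F (hq : q ≠ 0) {F : U} (hΔF : ΔU F = F ⊗ₜ K + Ki ⊗ₜ F)
    (hKi : (fundamentalMatrix q a b).map (pr Ki) = diagonal ![v, v⁻¹])
    (hFa : pr F a = 0) (hFb : pr F b = 0) (hFas : pr F (star a) = 0)
    (hFbs : pr F (-(q • star b)) = 1) :
    (fundamentalMatrix q a b).map (contract ΔU pr F) = !![v • F, K; 0, v⁻¹ • F] := by
  have hFbs' : pr F (star b) = -q⁻¹ := by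
    rw [map_neg, map_smul, smul_eq_mul] at hFbs
    field_simp
    linear_combination -hFbs
  ext i j
  have h := congr_fun₂ hKi i j
  fin_cases i <;> fin_cases j <;>
    simp_all [fundamentalMatrix, contract]

end Generators

end FundamentalMatrix

section TwistedCommutation

variable {R A : Type*} [CommSemiring R] [Semiring A] [Algebra R A]

theorem pow_mul_eq_smul_mul_pow {x y : A} {c : R} (h : y * x = c • (x * y)) (n : ℕ) :
    y ^ n * x = c ^ n • (x * y ^ n) := by
  induction n with
  | zero => simp
  | succ n ih =>
    rw [pow_succ, mul_assoc, h, mul_smul_comm, ← mul_assoc, ih, smul_mul_assoc, smul_smul,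
      mul_assoc, ← pow_succ, ← pow_succ']

end TwistedCommutation

section Monomials

open Matrix

variable {𝕜 : Type*} [Field 𝕜] {q : 𝕜} {U : Type} [Ring U] [Algebra 𝕜 U] {K Ki E F : U} {v : 𝕜}

theorem zpowGen_natCast (K Ki : U) (k : ℕ) : zpowGen K Ki k = K ^ k := by
  simp [zpowGen]

theorem zpowGen_neg_natCast (K Ki : U) (k : ℕ) : zpowGen K Ki (-k) = Ki ^ k := by
  rcases k with _ | k
  · simp [zpowGen]
  · rw [zpowGen, if_neg (by omega)]
    simp

theorem zpowGen_mul (hKi : Ki * K = 1) (m : ℤ) : zpowGen K Ki m * K = zpowGen K Ki (m + 1) := by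
  obtain ⟨k, rfl | rfl⟩ := Int.eq_nat_or_neg m
  · rw [zpowGen_natCast, ← pow_succ, ← zpowGen_natCast K Ki]
    push_cast
    rfl
  · rcases k with _ | k
    · simp [zpowGen]
    · rw [zpowGen_neg_natCast, pow_succ, mul_assoc, hKi, mul_one, ← zpowGen_neg_natCast K Ki]
      congr 1
      push_cast
      ring

variable (ρ : U →* Matrix (Fin 2) (Fin 2) U)

theorem map_Ki (hv : v ≠ 0) (hKi : Ki * K = 1) (hiK : K * Ki = 1)
    (hρK : ρ K = diagonal ![v⁻¹ • K, v • K]) : ρ Ki = diagonal ![v • Ki, v⁻¹ • Ki] := by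
  refine left_inv_eq_right_inv (a := ρ K) (by rw [← map_mul, hKi, map_one]) ?_
  rw [hρK, diagonal_mul_diagonal, ← diagonal_one]
  congr 1
  ext i
  fin_cases i <;> simp [hv, hiK]

theorem map_zpowGen (hρK : ρ K = diagonal ![v⁻¹ • K, v • K])
    (hρKi : ρ Ki = diagonal ![v • Ki, v⁻¹ • Ki]) (m : ℤ) :
    ρ (zpowGen K Ki m) = diagonal ![v ^ (-m) • zpowGen K Ki m, v ^ m • zpowGen K Ki m] := by
  obtain ⟨k, rfl | rfl⟩ := Int.eq_nat_or_neg m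
  · rw [zpowGen_natCast, map_pow, hρK, diagonal_pow]
    congr 1
    ext i
    fin_cases i <;> simp [smul_pow]
  · rw [zpowGen_neg_natCast, map_pow, hρKi, diagonal_pow]
    congr 1
    ext i
    fin_cases i <;> simp [smul_pow]

theorem map_E_pow (hv : v ≠ 0) (hq : v ^ 2 = q) (hEK : E * K = q⁻¹ • (K * E))
    (hρE : ρ E = !![v • E, 0; K, v⁻¹ • E]) (n : ℕ) :
    ρ (E ^ n) = !![v ^ n • E ^ n, 0;
      (v⁻¹ ^ (n - 1) * qNum q n) • (K * E ^ (n - 1)), v⁻¹ ^ n • E ^ n] := by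
  induction n with
  | zero => simp [qNum, one_fin_two]
  | succ n ih =>
    rw [pow_succ, map_mul, ih, hρE, mul_fin_two]
    ext i j
    fin_cases i <;> fin_cases j <;> simp [pow_succ, smul_smul, mul_comm]
    rcases n with _ | n
    · simp [qNum]
    · have hq0 : q ≠ 0 := hq ▸ pow_ne_zero 2 hv
      rw [Nat.add_sub_cancel, mul_assoc K, ← pow_succ, pow_mul_eq_smul_mul_pow hEK, smul_smul,
        ← add_smul, qNum_succ hq0 (n + 1)]
      congr 1
      subst hq
      field_simp
      ring

theorem map_F_pow (hv : v ≠ 0) (hq : v ^ 2 = q) (hFK : F * K = q • (K * F))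
    (hρF : ρ F = !![v • F, K; 0, v⁻¹ • F]) (l : ℕ) :
    ρ (F ^ l) = !![v ^ l • F ^ l, (v ^ (l - 1) * qNum q l) • (K * F ^ (l - 1));
      0, v⁻¹ ^ l • F ^ l] := by
  induction l with
  | zero => simp [qNum, one_fin_two]
  | succ l ih =>
    rw [pow_succ, map_mul, ih, hρF, mul_fin_two]
    ext i j
    fin_cases i <;> fin_cases j <;> simp [pow_succ, smul_smul, mul_comm]
    rcases l with _ | l
    · simp [qNum]
    · have hq0 : q ≠ 0 := hq ▸ pow_ne_zero 2 hv
      rw [Nat.add_sub_cancel, mul_assoc K, ← pow_succ, pow_mul_eq_smul_mul_pow hFK, smul_smul,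
        ← add_smul, qNum_succ' hq0 (l + 1)]
      congr 1
      subst hq
      field_simp
      ring

section Entries

variable (hv : v ≠ 0) (hq : v ^ 2 = q) (hKi : Ki * K = 1)
  (hEK : E * K = q⁻¹ • (K * E)) (hFK : F * K = q • (K * F))
  (hρK : ρ K = diagonal ![v⁻¹ • K, v • K]) (hρKi : ρ Ki = diagonal ![v • Ki, v⁻¹ • Ki])
  (hρE : ρ E = !![v • E, 0; K, v⁻¹ • E]) (hρF : ρ F = !![v • F, K; 0, v⁻¹ • F])
include hv hq hEK hFK hρK hρKi hρE hρF

theorem map_monomial_zero_zero (m : ℤ) (n l : ℕ) :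
    ρ (zpowGen K Ki m * E ^ n * F ^ l) 0 0 =
      v ^ ((n + l - m : ℤ)) • (zpowGen K Ki m * E ^ n * F ^ l) := by
  rw [map_mul, map_mul, map_zpowGen ρ hρK hρKi, map_E_pow ρ hv hq hEK hρE,
    map_F_pow ρ hv hq hFK hρF]
  simp [mul_apply, Fin.sum_univ_two, smul_smul, mul_assoc]
  congr 1
  rw [zpow_sub₀ hv, zpow_add₀ hv]
  simp only [zpow_natCast]
  ring

omit hEK hρE in
theorem map_zpowGen_mul_F_pow_one_zero (m : ℤ) (l : ℕ) :
    ρ (zpowGen K Ki m * F ^ l) 1 0 = 0 := by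
  rw [map_mul, map_zpowGen ρ hρK hρKi, map_F_pow ρ hv hq hFK hρF]
  simp [mul_apply, Fin.sum_univ_two, qNum]

omit hFK hρF in
theorem map_zpowGen_mul_E_pow_zero_one (m : ℤ) (n : ℕ) :
    ρ (zpowGen K Ki m * E ^ n) 0 1 = 0 := by
  rw [map_mul, map_zpowGen ρ hρK hρKi, map_E_pow ρ hv hq hEK hρE]
  simp [mul_apply, Fin.sum_univ_two, qNum]

include hKi

theorem map_monomial_one_zero (m : ℤ) (n l : ℕ) :
    ρ (zpowGen K Ki m * E ^ (n + 1) * F ^ l) 1 0 =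
      (v ^ ((m + l - n : ℤ)) * qNum q (n + 1)) • (zpowGen K Ki (m + 1) * E ^ n * F ^ l) := by
  rw [map_mul, map_mul, map_zpowGen ρ hρK hρKi, map_E_pow ρ hv hq hEK hρE,
    map_F_pow ρ hv hq hFK hρF]
  simp [mul_apply, Fin.sum_univ_two, smul_smul, ← mul_assoc, zpowGen_mul hKi]
  congr 1
  rw [zpow_sub₀ hv, zpow_add₀ hv]
  simp only [zpow_natCast]
  ring

theorem map_monomial_zero_one (m : ℤ) (n l : ℕ) :
    ρ (zpowGen K Ki m * E ^ n * F ^ (l + 1)) 0 1 =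
      (v ^ ((l - m - n : ℤ)) * qNum q (l + 1)) • (zpowGen K Ki (m + 1) * E ^ n * F ^ l) := by
  rw [map_mul, map_mul, map_zpowGen ρ hρK hρKi, map_E_pow ρ hv hq hEK hρE,
    map_F_pow ρ hv hq hFK hρF]
  simp [mul_apply, Fin.sum_univ_two, smul_smul, ← mul_assoc]
  rw [mul_assoc (zpowGen K Ki m), pow_mul_eq_smul_mul_pow hEK, mul_smul_comm, ← mul_assoc,
    zpowGen_mul hKi, smul_mul_assoc, smul_smul]
  congr 1
  subst hq
  rw [zpow_sub₀ hv, zpow_sub₀ hv]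
  simp only [zpow_natCast, inv_pow]
  field_simp
  ring

end Entries

end Monomials

section Recursion

variable {𝕜 : Type*} [Field 𝕜] {q v : 𝕜} {P : Type*} [Monoid P] {a b c : P}
  {f : ℤ → ℕ → ℕ → P → 𝕜} (hv : v ≠ 0)
  (hone : ∀ m n l, f m n l 1 = if n = 0 ∧ l = 0 then 1 else 0)
  (ha : ∀ m n l z, f m n l (a * z) = v ^ ((n + l - m : ℤ)) * f m n l z)
  (hb_zero : ∀ m l z, f m 0 l (b * z) = 0)
  (hb : ∀ m n l z, f m (n + 1) l (b * z) =
    v ^ ((m + l - n : ℤ)) * qNum q (n + 1) * f (m + 1) n l z)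
  (hc_zero : ∀ m n z, f m n 0 (c * z) = 0)
  (hc : ∀ m n l z, f m n (l + 1) (c * z) =
    v ^ ((l - m - n : ℤ)) * qNum q (l + 1) * f (m + 1) n l z)

include hv hone hc_zero hc in
theorem apply_pow_of_recursions (t : ℕ) : ∀ m n l, f m n l (c ^ t) =
    if 0 = n ∧ t = l then v ^ (m * (-t)) * qFactorial q n * qFactorial q l else 0 := by
  induction t with
  | zero =>
    intro m n l
    rw [pow_zero, hone]
    by_cases h : n = 0 ∧ l = 0
    · obtain ⟨rfl, rfl⟩ := h
      simp [qFactorial]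
    · rw [if_neg h, if_neg (by omega)]
  | succ t ih =>
    intro m n l
    rcases l with _ | l
    · rw [pow_succ', hc_zero, if_neg (by omega)]
    rw [pow_succ', hc, ih]
    by_cases h : 0 = n ∧ t = l
    · obtain ⟨rfl, rfl⟩ := h
      rw [if_pos ⟨rfl, rfl⟩, if_pos ⟨rfl, rfl⟩, qFactorial_succ]
      have : v ^ ((t : ℤ) - m - 0) * v ^ ((m + 1) * -(t : ℤ)) = v ^ (m * -((t + 1 : ℕ) : ℤ)) := by
        rw [← zpow_add₀ hv]
        push_cast
        ring_nf
      linear_combination (qNum q (t + 1) * qFactorial q 0 * qFactorial q t) * this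
    · rw [if_neg h, if_neg (by omega), mul_zero]

include hv hone hb_zero hb hc_zero hc in
theorem apply_pow_mul_pow_of_recursions (s t : ℕ) : ∀ m n l, f m n l (b ^ s * c ^ t) =
    if s = n ∧ t = l then v ^ (m * (s - t)) * qFactorial q n * qFactorial q l else 0 := by
  induction s with
  | zero =>
    intro m n l
    rw [pow_zero, one_mul, apply_pow_of_recursions hv hone hc_zero hc]
    simp
  | succ s ih =>
    intro m n l
    rcases n with _ | n
    · rw [pow_succ', mul_assoc, hb_zero, if_neg (by omega)]
    rw [pow_succ', mul_assoc, hb, ih]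
    by_cases h : s = n ∧ t = l
    · obtain ⟨rfl, rfl⟩ := h
      rw [if_pos ⟨rfl, rfl⟩, if_pos ⟨rfl, rfl⟩, qFactorial_succ]
      have : v ^ ((m : ℤ) + t - s) * v ^ ((m + 1) * ((s : ℤ) - t)) =
          v ^ (m * (((s + 1 : ℕ) : ℤ) - t)) := by
        rw [← zpow_add₀ hv]
        push_cast
        ring_nf
      linear_combination (qNum q (s + 1) * qFactorial q s * qFactorial q t) * this
    · rw [if_neg h, if_neg (by omega), mul_zero]

include hv hone ha hb_zero hb hc_zero hc in
theorem apply_monomial_of_recursions (m : ℤ) (n l r s t : ℕ) :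
    f m n l (a ^ r * b ^ s * c ^ t) =
      if s = n ∧ t = l then
        v ^ (m * (-r + s - t)) * v ^ ((r * (n + l) : ℤ)) * qFactorial q n * qFactorial q l
      else 0 := by
  induction r with
  | zero => simpa using apply_pow_mul_pow_of_recursions hv hone hb_zero hb hc_zero hc s t m n l
  | succ r ih =>
    rw [pow_succ', mul_assoc, mul_assoc, ha, ← mul_assoc, ih]
    split_ifs
    · have : v ^ ((n : ℤ) + l - m) * (v ^ (m * (-r + s - t)) * v ^ ((r * (n + l) : ℤ))) =
          v ^ (m * (-((r + 1 : ℕ) : ℤ) + s - t)) * v ^ (((r + 1 : ℕ) : ℤ) * (n + l)) := by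
        simp only [← zpow_add₀ hv]
        push_cast
        ring_nf
      linear_combination (qFactorial q n * qFactorial q l) * this
    · rw [mul_zero]

end Recursion

section PairingOfMonomials

open Matrix

variable {𝕜 : Type*} [Field 𝕜] {q v : 𝕜} {U P : Type} [Ring U] [Algebra 𝕜 U] [Ring P]
  [Algebra 𝕜 P] {K Ki E F : U}

theorem pr_monomial_eq (pr : U →ₗ[𝕜] Dual 𝕜 P) {εU : U →ₐ[𝕜] 𝕜}
    (hunitP : ∀ x : U, pr x 1 = εU x)
    (hεK : εU K = 1) (hεKi : εU Ki = 1) (hεE : εU E = 0) (hεF : εU F = 0)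
    (ρ : U →* Matrix (Fin 2) (Fin 2) U) {u : Matrix (Fin 2) (Fin 2) P}
    (hpr : ∀ x i j z, pr x (u i j * z) = pr (ρ x i j) z)
    (hv : v ≠ 0) (hq : v ^ 2 = q) (hKi : Ki * K = 1)
    (hKE : K * E = q • (E * K)) (hKF : K * F = q⁻¹ • (F * K))
    (hρK : ρ K = diagonal ![v⁻¹ • K, v • K]) (hρKi : ρ Ki = diagonal ![v • Ki, v⁻¹ • Ki])
    (hρE : ρ E = !![v • E, 0; K, v⁻¹ • E]) (hρF : ρ F = !![v • F, K; 0, v⁻¹ • F])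
    (m : ℤ) (n l r s t : ℕ) :
    pr (zpowGen K Ki m * E ^ n * F ^ l) (u 0 0 ^ r * u 1 0 ^ s * u 0 1 ^ t) =
      if s = n ∧ t = l then
        v ^ (m * (-r + s - t)) * v ^ ((r * (n + l) : ℤ)) * qFactorial q n * qFactorial q l
      else 0 := by
  have hq0 : q ≠ 0 := hq ▸ pow_ne_zero 2 hv
  have hEK : E * K = q⁻¹ • (K * E) := by rw [hKE, smul_smul, inv_mul_cancel₀ hq0, one_smul]
  have hFK : F * K = q • (K * F) := by rw [hKF, smul_smul, mul_inv_cancel₀ hq0, one_smul]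
  have hεZ : ∀ m, εU (zpowGen K Ki m) = 1 := fun m => by
    unfold zpowGen
    split_ifs <;> simp [hεK, hεKi]
  refine apply_monomial_of_recursions (f := fun m n l z => pr (zpowGen K Ki m * E ^ n * F ^ l) z)
    hv (fun m n l => ?_) (fun m n l z => ?_) (fun m l z => ?_) (fun m n l z => ?_)
    (fun m n z => ?_) (fun m n l z => ?_) m n l r s t
  · rcases n with _ | n <;> rcases l with _ | l <;> simp [hunitP, hεZ, hεE, hεF]
  · simp [hpr, map_monomial_zero_zero ρ hv hq hEK hFK hρK hρKi hρE hρF]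
  · simp only [pow_zero, mul_one, hpr]
    simp [map_zpowGen_mul_F_pow_one_zero ρ hv hq hFK hρK hρKi hρF]
  · simp [hpr, map_monomial_one_zero ρ hv hq hKi hEK hFK hρK hρKi hρE hρF]
  · simp only [pow_zero, mul_one, hpr]
    simp [map_zpowGen_mul_E_pow_zero_one ρ hv hq hEK hρK hρKi hρE]
  · simp [hpr, map_monomial_zero_one ρ hv hq hKi hEK hFK hρK hρKi hρE hρF]

end PairingOfMonomials

theorem ofReal_rpow_div_two {q : ℝ} (hq : 0 ≤ q) (x : ℝ) (k : ℤ) (hx : x = k) :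
    ((q ^ (x / 2) : ℝ) : ℂ) = ((√q : ℝ) : ℂ) ^ k := by
  rw [Real.sqrt_eq_rpow, ← Complex.ofReal_zpow, ← Real.rpow_intCast, ← Real.rpow_mul hq, hx]
  ring_nf

theorem pairing_formula_general (q : ℝ) (hq0 : 0 < q) (hq1 : q < 1)
    {U P : Type} [Ring U] [Algebra ℂ U] [Ring P] [Algebra ℂ P] [StarRing P]
    -- the generators of U_q(su(2)) and their relations
    (K Ki E F : U)
    (hKi : Ki * K = 1) (hiK : K * Ki = 1)
    (hKE : K * E = (q : ℂ) • (E * K)) (hKF : K * F = ((q : ℂ))⁻¹ • (F * K))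
    -- the generators of Pol(SU_q(2)) and their relations
    (a b : P)
    -- the comultiplications
    (ΔU : U →ₐ[ℂ] U ⊗[ℂ] U)
    (hΔK : ΔU K = K ⊗ₜ K)
    (hΔE : ΔU E = E ⊗ₜ K + Ki ⊗ₜ E) (hΔF : ΔU F = F ⊗ₜ K + Ki ⊗ₜ F)
    (ΔP : P →ₐ[ℂ] P ⊗[ℂ] P)
    (hΔa : ΔP a = a ⊗ₜ a - (q : ℂ) • (star b ⊗ₜ b))
    (hΔb : ΔP b = b ⊗ₜ a + star a ⊗ₜ b)
    (hΔas : ΔP (star a) = star a ⊗ₜ star a - (q : ℂ) • (b ⊗ₜ star b))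
    (hΔbs : ΔP (star b) = star b ⊗ₜ star a + a ⊗ₜ star b)
    -- the counits
    (εU : U →ₐ[ℂ] ℂ) (hεK : εU K = 1) (hεKi : εU Ki = 1) (hεE : εU E = 0) (hεF : εU F = 0)
    (εP : P →ₐ[ℂ] ℂ) (hεa : εP a = 1) (hεas : εP (star a) = 1) (hεb : εP b = 0)
    (hεbs : εP (star b) = 0)
    -- the Hopf pairing
    (pr : U →ₗ[ℂ] Dual ℂ P)
    (hmulP : ∀ (x : U) (y z : P),
      pr x (y * z) = TensorProduct.dualDistrib ℂ P P (TensorProduct.map pr pr (ΔU x)) (y ⊗ₜ z))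
    (hmulU : ∀ (x y : U) (z : P),
      pr (x * y) z = TensorProduct.dualDistrib ℂ P P (pr x ⊗ₜ pr y) (ΔP z))
    (hunitP : ∀ x : U, pr x 1 = εU x)
    (hunitU : ∀ y : P, pr 1 y = εP y)
    -- the generator pairings
    (hKa : pr K a = ((q ^ (-(1/2 : ℝ)) : ℝ) : ℂ))
    (hKas : pr K (star a) = ((q ^ ((1/2 : ℝ)) : ℝ) : ℂ))
    (hEb : pr E b = 1)
    (hFbs : pr F (-((q : ℂ) • star b)) = 1)
    (hKb : pr K b = 0) (hKbs : pr K (star b) = 0)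
    (hEa : pr E a = 0) (hEas : pr E (star a) = 0) (hEbs : pr E (star b) = 0)
    (hFa : pr F a = 0) (hFas : pr F (star a) = 0) (hFb : pr F b = 0) :
    ∀ (m : ℤ) (n l r s t : ℕ),
      pr (zpowGen K Ki m * E ^ n * F ^ l) (a ^ r * b ^ s * (-((q : ℂ) • star b)) ^ t) =
        if s = n ∧ t = l then
          ((q ^ (((m : ℝ) * (-(r : ℝ) + (s : ℝ) - (t : ℝ))) / 2) *
            q ^ (((r : ℝ) * ((n : ℝ) + (l : ℝ))) / 2) * Gfun q n * Gfun q l : ℝ) : ℂ)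
        else 0 := by
  intro m n l r s t
  set v : ℂ := ((√q : ℝ) : ℂ)
  have hv : v ≠ 0 := by simp [v, Real.sqrt_ne_zero'.2 hq0]
  have hvq : v ^ 2 = (q : ℂ) := by simp only [v, ← Complex.ofReal_pow, Real.sq_sqrt hq0.le]
  have hKa' : pr K a = v⁻¹ := by
    rw [hKa, Real.rpow_neg hq0.le, ← Real.sqrt_eq_rpow, Complex.ofReal_inv]
  have hKas' : pr K (star a) = v := by rw [hKas, ← Real.sqrt_eq_rpow]
  set u := fundamentalMatrix (q : ℂ) a b
  let ρ := contractMatrixHom ΔU (coproduct_fundamentalMatrix hΔa hΔb hΔas hΔbs) hmulU hunitU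
    (counit_fundamentalMatrix hεa hεas hεb hεbs)
  have hρK : ρ K = Matrix.diagonal ![v⁻¹ • K, v • K] := map_contract_K hΔK hKa' hKas' hKb hKbs
  have hρKi := map_Ki ρ hv hKi hiK hρK
  have hKi_pr : u.map (pr Ki) = Matrix.diagonal ![v, v⁻¹] := by
    rw [map_pr_eq_map_counit hmulP hunitP]
    change (ρ Ki).map εU = _
    rw [hρKi, Matrix.diagonal_map (map_zero εU)]
    congr 1
    ext i
    fin_cases i <;> simp [hεKi]
  have hρE := map_contract_E hΔE hKi_pr hEa hEb hEas hEbs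
  have hρF := map_contract_F (hvq ▸ pow_ne_zero 2 hv) hΔF hKi_pr hFa hFb hFas hFbs
  have hG : ∀ k, ((Gfun q k : ℝ) : ℂ) = qFactorial (q : ℂ) k := fun k => by
    rw [Gfun_eq_qFactorial hq0.ne' (pow_lt_one₀ hq0.le hq1 two_ne_zero).ne,
      ← Complex.ofRealHom_eq_coe, map_qFactorial]
    rfl
  refine (pr_monomial_eq pr hunitP hεK hεKi hεE hεF ρ
    (fun x i j z => pr_mul_eq_pr_contract hmulP x (u i j) z) hv hvq hKi hKE hKF hρK hρKi hρE hρF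
    m n l r s t).trans ?_
  split_ifs
  · rw [Complex.ofReal_mul, Complex.ofReal_mul, Complex.ofReal_mul, hG, hG,
      ofReal_rpow_div_two hq0.le _ (m * (-r + s - t)) (by push_cast; ring),
      ofReal_rpow_div_two hq0.le _ (r * (n + l)) (by push_cast; ring)]
  · rfl

/-- The pairing formula between `U_q(su(2))` and `Pol(SU_q(2))`:
`⟨K^m E^n F^l, a^r b^s (-qb*)^t⟩ = δ_{s,n} δ_{t,l} q^{m(-r+s-t)/2} q^{r(n+l)/2} G_n(q) G_l(q)`,
for the Hopf pairing determined by `⟨K,a⟩ = q^{-1/2}`, `⟨K,a*⟩ = q^{1/2}`, `⟨E,b⟩ = 1`,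
`⟨F,-qb*⟩ = 1` and zero on all other pairs of generators. -/
theorem pairing_formula (q : ℝ) (hq0 : 0 < q) (hq1 : q < 1)
    {U P : Type} [Ring U] [Algebra ℂ U] [StarRing U] [Ring P] [Algebra ℂ P] [StarRing P]
    -- the generators of U_q(su(2)) and their relations
    (K Ki E F : U)
    (hKi : Ki * K = 1) (hiK : K * Ki = 1)
    (hKE : K * E = (q : ℂ) • (E * K)) (hKF : K * F = ((q : ℂ))⁻¹ • (F * K))
    (hKs : star K = K) (hEs : star E = F)
    (hEF : E * F - F * E =
      (((q - q⁻¹)⁻¹ : ℝ) : ℂ) • ((K * K) - (Ki * Ki)))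
    -- the generators of Pol(SU_q(2)) and their relations
    (a b : P)
    (p1 : star a * a + star b * b = 1)
    (p2 : a * star a + ((q : ℂ) ^ 2) • (b * star b) = 1)
    (p3 : a * b = (q : ℂ) • (b * a))
    (p4 : star a * b = ((q : ℂ))⁻¹ • (b * star a))
    (p5 : b * star b = star b * b)
    -- the comultiplications
    (ΔU : U →ₐ[ℂ] U ⊗[ℂ] U)
    (hΔK : ΔU K = K ⊗ₜ K) (hΔKi : ΔU Ki = Ki ⊗ₜ Ki)
    (hΔE : ΔU E = E ⊗ₜ K + Ki ⊗ₜ E) (hΔF : ΔU F = F ⊗ₜ K + Ki ⊗ₜ F)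
    (ΔP : P →ₐ[ℂ] P ⊗[ℂ] P)
    (hΔa : ΔP a = a ⊗ₜ a - (q : ℂ) • (star b ⊗ₜ b))
    (hΔb : ΔP b = b ⊗ₜ a + star a ⊗ₜ b)
    (hΔas : ΔP (star a) = star a ⊗ₜ star a - (q : ℂ) • (b ⊗ₜ star b))
    (hΔbs : ΔP (star b) = star b ⊗ₜ star a + a ⊗ₜ star b)
    -- the counits
    (εU : U →ₐ[ℂ] ℂ) (hεK : εU K = 1) (hεKi : εU Ki = 1) (hεE : εU E = 0) (hεF : εU F = 0)
    (εP : P →ₐ[ℂ] ℂ) (hεa : εP a = 1) (hεas : εP (star a) = 1) (hεb : εP b = 0)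
    (hεbs : εP (star b) = 0)
    -- the Hopf pairing
    (pr : U →ₗ[ℂ] Dual ℂ P)
    (hmulP : ∀ (x : U) (y z : P),
      pr x (y * z) = TensorProduct.dualDistrib ℂ P P (TensorProduct.map pr pr (ΔU x)) (y ⊗ₜ z))
    (hmulU : ∀ (x y : U) (z : P),
      pr (x * y) z = TensorProduct.dualDistrib ℂ P P (pr x ⊗ₜ pr y) (ΔP z))
    (hunitP : ∀ x : U, pr x 1 = εU x)
    (hunitU : ∀ y : P, pr 1 y = εP y)
    -- the generator pairings
    (hKa : pr K a = ((q ^ (-(1/2 : ℝ)) : ℝ) : ℂ))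
    (hKas : pr K (star a) = ((q ^ ((1/2 : ℝ)) : ℝ) : ℂ))
    (hEb : pr E b = 1)
    (hFbs : pr F (-((q : ℂ) • star b)) = 1)
    (hKb : pr K b = 0) (hKbs : pr K (star b) = 0)
    (hEa : pr E a = 0) (hEas : pr E (star a) = 0) (hEbs : pr E (star b) = 0)
    (hFa : pr F a = 0) (hFas : pr F (star a) = 0) (hFb : pr F b = 0) :
    ∀ (m : ℤ) (n l r s t : ℕ),
      pr (zpowGen K Ki m * E ^ n * F ^ l) (a ^ r * b ^ s * (-((q : ℂ) • star b)) ^ t) =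
        if s = n ∧ t = l then
          ((q ^ (((m : ℝ) * (-(r : ℝ) + (s : ℝ) - (t : ℝ))) / 2) *
            q ^ (((r : ℝ) * ((n : ℝ) + (l : ℝ))) / 2) * Gfun q n * Gfun q l : ℝ) : ℂ)
        else 0 :=
  pairing_formula_general q hq0 hq1 K Ki E F hKi hiK hKE hKF a b ΔU hΔK hΔE hΔF ΔP hΔa hΔb hΔas hΔbs
    εU hεK hεKi hεE hεF εP hεa hεas hεb hεbs pr hmulP hmulU hunitP hunitU hKa hKas hEb hFbs hKb hKbs
    hEa hEas hEbs hFa hFas hFb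
end
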